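/- arXiv:1711.06539 — 5 statements merged into one kernel-verified Lean document; each statement's English description precedes it below -/
import Mathlib

section
/- Let f : 𝔹ⁿ → 𝔹ᴺ be holomorphic with f(0) = 0, and let γ be a unitary transformation of ℂⁿ. Then there exists an automorphism ψ of 𝔹ᴺ with f ∘ γ = ψ ∘ f if and only if ‖f(γ(z))‖² = ‖f(z)‖² for all z ∈ 𝔹ⁿ. -/
/-!
If `f ∘ γ = ψ ∘ f` for an automorphism `ψ` of the ball, then `ψ 0 = 0`, and the Schwarz lemma
applied to `ψ` and to its inverse shows that `ψ` preserves norms.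

Conversely, equal norms of the holomorphic maps `f` and `f ∘ γ` polarize to equal inner products
`⟪f z, f w⟫ = ⟪f (γ z), f (γ w)⟫`. Two families with the same Gram matrix differ by a unitary
map `U` of `ℂᴺ`, so `f ∘ γ = U ∘ f`, and `U` is an automorphism of the ball.
-/

noncomputable section
open Metric Set

def IsBallAut {ι : Type} [Fintype ι] (ψ : EuclideanSpace ℂ ι → EuclideanSpace ℂ ι) : Prop :=
  DifferentiableOn ℂ ψ (ball (0 : EuclideanSpace ℂ ι) 1) ∧
    MapsTo ψ (ball (0 : EuclideanSpace ℂ ι) 1) (ball (0 : EuclideanSpace ℂ ι) 1) ∧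
    ∃ φ : EuclideanSpace ℂ ι → EuclideanSpace ℂ ι,
      DifferentiableOn ℂ φ (ball (0 : EuclideanSpace ℂ ι) 1) ∧
      MapsTo φ (ball (0 : EuclideanSpace ℂ ι) 1) (ball (0 : EuclideanSpace ℂ ι) 1) ∧
      (∀ z ∈ ball (0 : EuclideanSpace ℂ ι) 1, φ (ψ z) = z) ∧
      (∀ z ∈ ball (0 : EuclideanSpace ℂ ι) 1, ψ (φ z) = z)

open scoped InnerProductSpace ComplexConjugate Topology

theorem AnalyticOnNhd.eqOn_of_preconnected_of_eq_ofReal {F : Type*} [NormedAddCommGroup F]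
    [NormedSpace ℂ F] {A B : ℂ → F} {T : Set ℂ} (hA : AnalyticOnNhd ℂ A T)
    (hB : AnalyticOnNhd ℂ B T) (hT : IsPreconnected T) (hT_open : IsOpen T) {x₀ : ℝ}
    (hx₀ : (x₀ : ℂ) ∈ T) (hAB : ∀ x : ℝ, (x : ℂ) ∈ T → A x = B x) : EqOn A B T := by
  refine hA.eqOn_of_preconnected_of_frequently_eq hB hT hx₀ ?_
  have hreal : ∀ᶠ x : ℝ in 𝓝[≠] x₀, A x = B x :=
    (((Complex.continuous_ofReal.tendsto x₀).eventually (hT_open.mem_nhds hx₀)).mono hAB)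
      |>.filter_mono nhdsWithin_le_nhds
  have htends : Filter.Tendsto ((↑) : ℝ → ℂ) (𝓝[≠] x₀) (𝓝[≠] (x₀ : ℂ)) :=
    tendsto_nhdsWithin_iff.2 ⟨(Complex.continuous_ofReal.tendsto x₀).mono_left nhdsWithin_le_nhds,
      eventually_nhdsWithin_of_forall fun x hx => by simpa using hx⟩
  exact htends.frequently hreal.frequently

theorem analyticOnNhd_inner_comp_conj {ι : Type*} [Fintype ι] {G : ℂ → EuclideanSpace ℂ ι}
    {V : Set ℂ} (hV : IsOpen V) (hG : DifferentiableOn ℂ G V) :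
    AnalyticOnNhd ℂ (fun t => ⟪G (conj t), G t⟫_ℂ) (V ∩ conj ⁻¹' V) := by
  refine DifferentiableOn.analyticOnNhd (fun t ht => DifferentiableAt.differentiableWithinAt ?_)
    (hV.inter (hV.preimage Complex.continuous_conj))
  have hGt := hG.differentiableAt (hV.mem_nhds ht.1)
  have hGt' := hG.differentiableAt (hV.mem_nhds ht.2)
  simp only [PiLp.inner_apply, RCLike.inner_apply]
  refine DifferentiableAt.fun_sum fun i _ => DifferentiableAt.mul ?_ ?_
  · exact (EuclideanSpace.proj i).differentiableAt.comp _ hGt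
  · exact differentiableAt_conj_conj_iff.2 ((EuclideanSpace.proj i).differentiableAt.comp _ hGt')

open Complex in
theorem inner_eq_inner_of_norm_eq {E ι κ : Type*} [NormedAddCommGroup E] [NormedSpace ℂ E]
    [Fintype ι] [Fintype κ] {U : Set E} (hU_open : IsOpen U) (hU : Convex ℝ U)
    {g : E → EuclideanSpace ℂ ι} {h : E → EuclideanSpace ℂ κ} (hg : DifferentiableOn ℂ g U)
    (hh : DifferentiableOn ℂ h U) (hgh : ∀ x ∈ U, ‖g x‖ = ‖h x‖) {z w : E} (hz : z ∈ U)
    (hw : w ∈ U) : ⟪g z, g w⟫_ℂ = ⟪h z, h w⟫_ℂ := by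
  -- On the complex line `u` with `u (I / 2) = z` and `u (-I / 2) = w`, the holomorphic function
  -- `t ↦ ⟪g (u (conj t)), g (u t)⟫` is `‖g (u t)‖ ^ 2` for real `t` and `⟪g z, g w⟫` at `-I / 2`.
  set p : E := (1 / 2 : ℝ) • z + (1 / 2 : ℝ) • w
  set u : ℂ → E := fun t => p + t • (I • (w - z))
  have huz : u (I / 2) = z := by
    simp only [u, p]
    rw [smul_smul, div_mul_eq_mul_div, I_mul_I]
    module
  have huw : u (-(I / 2)) = w := by
    simp only [u, p]
    rw [smul_smul, neg_mul, div_mul_eq_mul_div, I_mul_I]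
    module
  have hconj : conj (-(I / 2)) = I / 2 := by simp [map_ofNat, neg_div]
  have hu : Differentiable ℂ u := by fun_prop
  have huU_open : IsOpen (u ⁻¹' U) := hU_open.preimage hu.continuous
  have huU : Convex ℝ (u ⁻¹' U) :=
    (hU.translate_preimage_right p).linear_preimage
      ((LinearMap.toSpanSingleton ℂ E (I • (w - z))).restrictScalars ℝ)
  set T : Set ℂ := u ⁻¹' U ∩ conj ⁻¹' (u ⁻¹' U)
  have hT : Convex ℝ T := huU.inter (huU.linear_preimage conjLIE.toLinearEquiv.toLinearMap)
  have h0 : ((0 : ℝ) : ℂ) ∈ T := by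
    have : u 0 ∈ U := by simpa [u, p] using hU hz hw (by norm_num) (by norm_num) (by norm_num)
    simpa [T] using this
  have hI : -(I / 2) ∈ T :=
    ⟨by simpa only [mem_preimage, huw], by simpa only [mem_preimage, hconj, huz]⟩
  have hA := analyticOnNhd_inner_comp_conj huU_open
    (hg.comp hu.differentiableOn (mapsTo_preimage u U))
  have hB := analyticOnNhd_inner_comp_conj huU_open
    (hh.comp hu.differentiableOn (mapsTo_preimage u U))
  have key := hA.eqOn_of_preconnected_of_eq_ofReal hB hT.isPreconnected
    (huU_open.inter (huU_open.preimage continuous_conj)) h0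
    (fun x hx => by simp [inner_self_eq_norm_sq_to_K, hgh _ hx.1]) hI
  simpa [hconj, huz, huw] using key

theorem exists_linearIsometryEquiv_apply_eq_of_inner_eq {𝕜 F α : Type*} [RCLike 𝕜]
    [NormedAddCommGroup F] [InnerProductSpace 𝕜 F] [FiniteDimensional 𝕜 F] (a b : α → F)
    (h : ∀ i j, ⟪a i, a j⟫_𝕜 = ⟪b i, b j⟫_𝕜) :
    ∃ U : F ≃ₗᵢ[𝕜] F, ∀ i, U (a i) = b i := by
  classical
  set La := Finsupp.linearCombination 𝕜 a
  set Lb := Finsupp.linearCombination 𝕜 b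
  have hform : ((innerₛₗ 𝕜).comp La).compl₂ La = ((innerₛₗ 𝕜).comp Lb).compl₂ Lb :=
    LinearMap.ext_basis Finsupp.basisSingleOne Finsupp.basisSingleOne fun i j => by
      simpa [La, Lb] using h i j
  have hnorm : ∀ c, ‖La c‖ = ‖Lb c‖ := fun c => by
    rw [@norm_eq_sqrt_re_inner 𝕜, @norm_eq_sqrt_re_inner 𝕜]
    exact congrArg (fun B => √(RCLike.re (B c c))) hform
  have hker : LinearMap.ker La ≤ LinearMap.ker Lb := fun c hc => by
    rw [LinearMap.mem_ker, ← norm_eq_zero, ← hnorm, norm_eq_zero]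
    exact hc
  set T : LinearMap.range La →ₗ[𝕜] F :=
    (LinearMap.ker La).liftQ Lb hker ∘ₗ La.quotKerEquivRange.symm.toLinearMap
  have hT : ∀ c, T ⟨La c, LinearMap.mem_range_self La c⟩ = Lb c := fun c => by
    simp [T, LinearMap.quotKerEquivRange_symm_apply_image]
  have hTnorm : ∀ y, ‖T y‖ = ‖y‖ := by
    rintro ⟨_, c, rfl⟩
    rw [hT, Submodule.coe_norm, hnorm]
  let L : LinearMap.range La →ₗᵢ[𝕜] F := ⟨T, hTnorm⟩
  refine ⟨L.extend.toLinearIsometryEquiv rfl, fun i => ?_⟩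
  have hai : a i =
      (⟨La (Finsupp.single i 1), LinearMap.mem_range_self La _⟩ : LinearMap.range La) := by
    simp [La]
  rw [LinearIsometry.coe_toLinearIsometryEquiv, hai, LinearIsometry.extend_apply]
  simp [L, hT, Lb]

theorem IsBallAut.norm_apply_eq {ι : Type} [Fintype ι] {ψ : EuclideanSpace ℂ ι → EuclideanSpace ℂ ι}
    (hψ : IsBallAut ψ) (hψ0 : ψ 0 = 0) {x : EuclideanSpace ℂ ι} (hx : x ∈ ball 0 1) :
    ‖ψ x‖ = ‖x‖ := by
  obtain ⟨hψd, hψm, φ, hφd, hφm, hφψ, -⟩ := hψ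
  have hφ0 : φ 0 = 0 := by simpa [hψ0] using hφψ 0 (mem_ball_self one_pos)
  refine le_antisymm (Complex.norm_le_norm_of_mapsTo_ball hψd
    (hψm.mono_right ball_subset_closedBall) hψ0 (mem_ball_zero_iff.1 hx)) ?_
  simpa only [hφψ x hx] using Complex.norm_le_norm_of_mapsTo_ball hφd
    (hφm.mono_right ball_subset_closedBall) hφ0 (mem_ball_zero_iff.1 (hψm hx))

theorem LinearIsometryEquiv.isBallAut {ι : Type} [Fintype ι]
    (U : EuclideanSpace ℂ ι ≃ₗᵢ[ℂ] EuclideanSpace ℂ ι) : IsBallAut U := by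
  have hmaps : ∀ V : EuclideanSpace ℂ ι ≃ₗᵢ[ℂ] EuclideanSpace ℂ ι, MapsTo V (ball 0 1) (ball 0 1) :=
    fun V x hx => by simpa using hx
  exact ⟨U.differentiable.differentiableOn, hmaps U, U.symm, U.symm.differentiable.differentiableOn,
    hmaps U.symm, fun x _ => U.symm_apply_apply x, fun x _ => U.apply_symm_apply x⟩

/-- For holomorphic `f : 𝔹ⁿ → 𝔹ᴺ` with `f 0 = 0` and a unitary `γ` of `ℂⁿ`,
there is an automorphism `ψ` of `𝔹ᴺ` with `f ∘ γ = ψ ∘ f` iff `‖f(γ z)‖² = ‖f z‖²` on the ball. -/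
theorem stmt2 {n N : ℕ}
    (f : EuclideanSpace ℂ (Fin n) → EuclideanSpace ℂ (Fin N))
    (hf : DifferentiableOn ℂ f (ball (0 : EuclideanSpace ℂ (Fin n)) 1))
    (hfm : MapsTo f (ball (0 : EuclideanSpace ℂ (Fin n)) 1) (ball (0 : EuclideanSpace ℂ (Fin N)) 1))
    (hf0 : f 0 = 0)
    (γ : EuclideanSpace ℂ (Fin n) ≃ₗᵢ[ℂ] EuclideanSpace ℂ (Fin n)) :
    (∃ ψ : EuclideanSpace ℂ (Fin N) → EuclideanSpace ℂ (Fin N), IsBallAut ψ ∧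
        ∀ z ∈ ball (0 : EuclideanSpace ℂ (Fin n)) 1, f (γ z) = ψ (f z)) ↔
      (∀ z ∈ ball (0 : EuclideanSpace ℂ (Fin n)) 1, ‖f (γ z)‖ ^ 2 = ‖f z‖ ^ 2) := by
  constructor
  · rintro ⟨ψ, hψ, hcomm⟩ z hz
    have hψ0 : ψ 0 = 0 := by simpa [hf0] using (hcomm 0 (mem_ball_self one_pos)).symm
    rw [hcomm z hz, hψ.norm_apply_eq hψ0 (hfm hz)]
  · intro hnorm
    have hγ : MapsTo γ (ball 0 1) (ball 0 1) := fun z hz => by simpa using hz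
    have hinner : ∀ z ∈ ball 0 1, ∀ w ∈ ball 0 1, ⟪f z, f w⟫_ℂ = ⟪f (γ z), f (γ w)⟫_ℂ :=
      fun z hz w hw => inner_eq_inner_of_norm_eq isOpen_ball (convex_ball 0 1) hf
        (hf.comp γ.differentiable.differentiableOn hγ)
        (fun x hx => (pow_left_inj₀ (norm_nonneg _) (norm_nonneg _) two_ne_zero).1
          (hnorm x hx).symm) hz hw
    obtain ⟨U, hU⟩ := exists_linearIsometryEquiv_apply_eq_of_inner_eq
      (fun z : ball (0 : EuclideanSpace ℂ (Fin n)) 1 => f z) (fun z => f (γ z))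
      (fun z w => hinner z z.2 w w.2)
    exact ⟨U, U.isBallAut, fun z hz => (hU ⟨z, hz⟩).symm⟩
end
end

section
/- Let f : 𝔹ⁿ → 𝔹ᵐ be minimal holomorphic with f(0) = 0, let k ≥ 1, N = k + m, and let g = 0 ⊕ f : 𝔹ⁿ → 𝔹ᴺ (z ↦ (0, f(z)) ∈ ℂᵏ × ℂᵐ). Then H_g = U(k) ⊕ I_m, i.e., the automorphisms ψ of 𝔹ᴺ with ψ ∘ g = g are exactly the block unitaries V ⊕ I_m with V ∈ U(k). -/
/-!
If `ψ ∘ g = g` then `ψ 0 = 0`, because `f 0 = 0`. The Schwarz lemma for `ψ` and for its inverse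
shows that `ψ` preserves norms, and the equality case of the Schwarz lemma on each complex line
through `0` (Euclidean space being strictly convex) shows that `ψ` agrees with its derivative `A`
at `0`, a unitary map. `A` fixes every `(0, f z)`, and these span `0 ⊕ ℂᵐ` by minimality of `f`;
preserving inner products, `A` then also maps `ℂᵏ ⊕ 0` to itself, where it is a unitary `V`.
Conversely `V ⊕ I_m` fixes every `(0, f z)`.
-/

noncomputable section
open Metric Set

theorem LinearMap.norm_map_of_norm_map_ball {𝕜 E F : Type*} [RCLike 𝕜]
    [NormedAddCommGroup E] [NormedSpace 𝕜 E] [NormedAddCommGroup F] [NormedSpace 𝕜 F]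
    {L : E →ₗ[𝕜] F} (hL : ∀ x ∈ ball (0 : E) 1, ‖L x‖ = ‖x‖) (x : E) : ‖L x‖ = ‖x‖ := by
  set c : 𝕜 := (((‖x‖ + 1)⁻¹ : ℝ) : 𝕜)
  have hc : ‖c‖ = (‖x‖ + 1)⁻¹ := by rw [RCLike.norm_ofReal, abs_of_pos (by positivity)]
  have hcx : c • x ∈ ball (0 : E) 1 := by
    rw [mem_ball_zero_iff, norm_smul, hc, inv_mul_lt_one₀ (by positivity)]
    linarith
  have := hL _ hcx
  rw [map_smul, norm_smul, norm_smul] at this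
  exact mul_left_cancel₀ (by simp [hc]; positivity) this

section Rigidity

variable {E F : Type*} [NormedAddCommGroup E] [NormedSpace ℂ E]
  [NormedAddCommGroup F] [NormedSpace ℂ F]

theorem norm_map_eq_of_leftInvOn_ball {ψ : E → F} {φ : F → E}
    (hψ : DifferentiableOn ℂ ψ (ball 0 1)) (hψb : MapsTo ψ (ball 0 1) (ball 0 1))
    (hφ : DifferentiableOn ℂ φ (ball 0 1)) (hφb : MapsTo φ (ball 0 1) (ball 0 1))
    (hφψ : LeftInvOn φ ψ (ball 0 1)) (hψ0 : ψ 0 = 0) {x : E} (hx : x ∈ ball (0 : E) 1) :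
    ‖ψ x‖ = ‖x‖ := by
  have hφ0 : φ 0 = 0 := by simpa [hψ0] using hφψ (mem_ball_self one_pos)
  refine le_antisymm (Complex.norm_le_norm_of_mapsTo_ball hψ
    (hψb.mono_right ball_subset_closedBall) hψ0 (mem_ball_zero_iff.1 hx)) ?_
  calc ‖x‖ = ‖φ (ψ x)‖ := by rw [hφψ hx]
    _ ≤ ‖ψ x‖ := Complex.norm_le_norm_of_mapsTo_ball hφ
      (hφb.mono_right ball_subset_closedBall) hφ0 (mem_ball_zero_iff.1 (hψb hx))

theorem eqOn_fderiv_of_norm_map_eq [StrictConvexSpace ℝ F] {ψ : E → F}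
    (hψ : DifferentiableOn ℂ ψ (ball 0 1)) (hnorm : ∀ x ∈ ball (0 : E) 1, ‖ψ x‖ = ‖x‖) :
    EqOn ψ (fderiv ℂ ψ 0) (ball 0 1) := by
  intro z hz
  have hψ0 : ψ 0 = 0 := norm_eq_zero.1 (by simpa using hnorm 0 (mem_ball_self one_pos))
  rcases eq_or_ne z 0 with rfl | hz0
  · simp [hψ0]
  have hzpos : 0 < ‖z‖ := norm_pos_iff.2 hz0
  set R := ‖z‖⁻¹
  set h : ℂ → F := fun l => ψ (l • z)
  have hline : MapsTo (fun l : ℂ => l • z) (ball 0 R) (ball 0 1) := fun l hl => by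
    rw [mem_ball_zero_iff, norm_smul, ← lt_inv_mul_iff₀' hzpos]
    simpa [R] using hl
  have hd : DifferentiableOn ℂ h (ball 0 R) := hψ.comp (by fun_prop) hline
  have hmaps : MapsTo h (ball 0 R) (closedBall (h 0) 1) := fun l hl => by
    simpa [h, hψ0, hnorm _ (hline hl)] using (mem_ball_zero_iff.1 (hline hl)).le
  have h1 : (1 : ℂ) ∈ ball 0 R := by simpa [R] using (one_lt_inv₀ hzpos).2 (mem_ball_zero_iff.1 hz)
  have hslope : ‖dslope h 0 1‖ = 1 / R := by
    simp [dslope_of_ne, slope_def_module, h, hψ0, hnorm z hz, R]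
  -- equality case of the Schwarz lemma: `h l = l • ψ z` on the whole disc
  have haff := Complex.affine_of_mapsTo_ball_of_norm_dslope_eq_div hd hmaps h1 hslope
  have hderiv : HasDerivAt h (ψ z) 0 := by
    refine (one_smul ℂ (ψ z) ▸ (hasDerivAt_id (0 : ℂ)).smul_const (ψ z)).congr_of_eventuallyEq ?_
    filter_upwards [isOpen_ball.mem_nhds (mem_ball_self (inv_pos.2 hzpos))] with l hl
    simpa [h, hψ0, dslope_of_ne, slope_def_module] using haff hl
  have hchain : HasDerivAt h (fderiv ℂ ψ 0 z) 0 := by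
    have hψ' : HasFDerivAt ψ (fderiv ℂ ψ 0) ((0 : ℂ) • z) := by
      simpa using (hψ.differentiableAt (ball_mem_nhds 0 one_pos)).hasFDerivAt
    have hcomp := hψ'.comp_hasDerivAt (0 : ℂ) ((hasDerivAt_id (0 : ℂ)).smul_const z)
    rw [one_smul] at hcomp
    exact hcomp
  exact hderiv.unique hchain

theorem exists_linearIsometry_eqOn_of_norm_map_eq [StrictConvexSpace ℝ F] {ψ : E → F}
    (hψ : DifferentiableOn ℂ ψ (ball 0 1)) (hnorm : ∀ x ∈ ball (0 : E) 1, ‖ψ x‖ = ‖x‖) :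
    ∃ A : E →ₗᵢ[ℂ] F, EqOn ψ A (ball 0 1) := by
  have hlin := eqOn_fderiv_of_norm_map_eq hψ hnorm
  refine ⟨⟨(fderiv ℂ ψ 0).toLinearMap, LinearMap.norm_map_of_norm_map_ball fun x hx => ?_⟩, hlin⟩
  rw [ContinuousLinearMap.coe_coe, ← hlin hx, hnorm x hx]

end Rigidity

theorem IsBallAut.exists_linearIsometry_eqOn {ι : Type} [Fintype ι]
    {ψ : EuclideanSpace ℂ ι → EuclideanSpace ℂ ι} (hψ : IsBallAut ψ) (hψ0 : ψ 0 = 0) :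
    ∃ A : EuclideanSpace ℂ ι →ₗᵢ[ℂ] EuclideanSpace ℂ ι, EqOn ψ A (ball 0 1) := by
  obtain ⟨hψd, hψb, φ, hφd, hφb, hφψ, -⟩ := hψ
  exact exists_linearIsometry_eqOn_of_norm_map_eq hψd
    fun x hx => norm_map_eq_of_leftInvOn_ball hψd hψb hφd hφb hφψ hψ0 hx

namespace EuclideanSpace

variable {𝕜 : Type*} [RCLike 𝕜] {ι κ : Type*} [Fintype ι] [Fintype κ]

theorem norm_sq_eq_sum_sum (x : EuclideanSpace 𝕜 (ι ⊕ κ)) :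
    ‖x‖ ^ 2 = ∑ i, ‖x (Sum.inl i)‖ ^ 2 + ∑ j, ‖x (Sum.inr j)‖ ^ 2 := by
  rw [norm_sq_eq, Fintype.sum_sum_type]

def sumInl : EuclideanSpace 𝕜 ι →ₗᵢ[𝕜] EuclideanSpace 𝕜 (ι ⊕ κ) where
  toFun v := WithLp.toLp 2 (Sum.elim (fun i => v i) fun _ => 0)
  map_add' u v := by ext (_ | _) <;> simp
  map_smul' a v := by ext (_ | _) <;> simp
  norm_map' v := by
    rw [← sq_eq_sq₀ (norm_nonneg _) (norm_nonneg _), norm_sq_eq_sum_sum, norm_sq_eq]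
    simp

def sumInr : EuclideanSpace 𝕜 κ →ₗᵢ[𝕜] EuclideanSpace 𝕜 (ι ⊕ κ) where
  toFun v := WithLp.toLp 2 (Sum.elim (fun _ => 0) fun j => v j)
  map_add' u v := by ext (_ | _) <;> simp
  map_smul' a v := by ext (_ | _) <;> simp
  norm_map' v := by
    rw [← sq_eq_sq₀ (norm_nonneg _) (norm_nonneg _), norm_sq_eq_sum_sum, norm_sq_eq]
    simp

@[simp] theorem sumInl_apply_inl (v : EuclideanSpace 𝕜 ι) (i : ι) :
    sumInl (κ := κ) v (Sum.inl i) = v i := rfl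
@[simp] theorem sumInl_apply_inr (v : EuclideanSpace 𝕜 ι) (j : κ) :
    sumInl (κ := κ) v (Sum.inr j) = 0 := rfl
@[simp] theorem sumInr_apply_inl (v : EuclideanSpace 𝕜 κ) (i : ι) :
    sumInr (ι := ι) v (Sum.inl i) = 0 := rfl
@[simp] theorem sumInr_apply_inr (v : EuclideanSpace 𝕜 κ) (j : κ) :
    sumInr (ι := ι) v (Sum.inr j) = v j := rfl

theorem sumInl_add_sumInr (x : EuclideanSpace 𝕜 (ι ⊕ κ)) :
    sumInl (WithLp.toLp 2 fun i => x (Sum.inl i)) + sumInr (WithLp.toLp 2 fun j => x (Sum.inr j))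
      = x := by
  ext (_ | _) <;> simp

theorem sumInr_single [DecidableEq ι] [DecidableEq κ] (j : κ) (a : 𝕜) :
    sumInr (ι := ι) (single j a) = single (Sum.inr j) a := by
  ext (_ | _) <;> simp

end EuclideanSpace

section BlockDiagonal

open EuclideanSpace

variable {𝕜 : Type*} [RCLike 𝕜] {ι κ : Type*} [Fintype ι] [Fintype κ]

theorem LinearIsometry.apply_eq_of_map_single [DecidableEq ι]
    (A : EuclideanSpace 𝕜 ι →ₗᵢ[𝕜] EuclideanSpace 𝕜 ι) {j : ι}
    (hj : A (single j 1) = single j 1) (x : EuclideanSpace 𝕜 ι) : A x j = x j := by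
  simpa [inner_single_left, hj] using A.inner_map_map (single j 1) x

theorem LinearIsometry.exists_eq_sumElim_of_comp_sumInr
    (A : EuclideanSpace 𝕜 (ι ⊕ κ) →ₗᵢ[𝕜] EuclideanSpace 𝕜 (ι ⊕ κ))
    (hA : ∀ u, A (sumInr u) = sumInr u) :
    ∃ V : EuclideanSpace 𝕜 ι ≃ₗᵢ[𝕜] EuclideanSpace 𝕜 ι, ∀ x,
      (A x : ι ⊕ κ → 𝕜) = Sum.elim (fun i => V (WithLp.toLp 2 fun i' => x (Sum.inl i')) i)
        (fun j => x (Sum.inr j)) := by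
  classical
  have hinr (x : EuclideanSpace 𝕜 (ι ⊕ κ)) (j : κ) : A x (Sum.inr j) = x (Sum.inr j) :=
    A.apply_eq_of_map_single (by simpa [sumInr_single] using hA (single j 1)) x
  have hinl (x : EuclideanSpace 𝕜 (ι ⊕ κ)) (i : ι) :
      A x (Sum.inl i) = A (sumInl (WithLp.toLp 2 fun i' => x (Sum.inl i'))) (Sum.inl i) := by
    conv_lhs => rw [← sumInl_add_sumInr x]
    simp [hA]
  let V₀ : EuclideanSpace 𝕜 ι →ₗ[𝕜] EuclideanSpace 𝕜 ι :=
    { toFun v := WithLp.toLp 2 fun i => A (sumInl v) (Sum.inl i)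
      map_add' u v := by ext; simp
      map_smul' a v := by ext; simp }
  have hV₀ (v : EuclideanSpace 𝕜 ι) : A (sumInl v) = sumInl (V₀ v) := by
    ext (i | j)
    · rfl
    · simp [hinr, V₀]
  let V : EuclideanSpace 𝕜 ι →ₗᵢ[𝕜] EuclideanSpace 𝕜 ι :=
    ⟨V₀, fun v => by rw [← (sumInl (κ := κ)).norm_map (V₀ v), ← hV₀, A.norm_map, sumInl.norm_map]⟩
  refine ⟨V.toLinearIsometryEquiv rfl, fun x => funext fun i => ?_⟩
  rcases i with i | j
  · exact hinl x i
  · exact hinr x j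

end BlockDiagonal

theorem Submodule.span_eq_top_of_forall_affineSubspace {k V : Type*} [Ring k] [AddCommGroup V]
    [Module k V] {s : Set V} (hs : ∀ t : AffineSubspace k V, s ⊆ t → t = ⊤) :
    Submodule.span k s = ⊤ := by
  have := hs (Submodule.span k s).toAffineSubspace fun x hx =>
    Submodule.mem_toAffineSubspace.2 (Submodule.subset_span hx)
  exact Submodule.eq_top_iff'.2 fun x =>
    Submodule.mem_toAffineSubspace.1 (this ▸ AffineSubspace.mem_top k V x)

theorem stmt6_general {n m k : ℕ}
    (f : EuclideanSpace ℂ (Fin n) → EuclideanSpace ℂ (Fin m))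
    (hfm : MapsTo f (ball (0 : EuclideanSpace ℂ (Fin n)) 1) (ball (0 : EuclideanSpace ℂ (Fin m)) 1))
    (hf0 : f 0 = 0)
    (hmin : ∀ s : AffineSubspace ℂ (EuclideanSpace ℂ (Fin m)),
      (∀ z ∈ ball (0 : EuclideanSpace ℂ (Fin n)) 1, f z ∈ s) → s = ⊤)
    (g : EuclideanSpace ℂ (Fin n) → EuclideanSpace ℂ (Fin k ⊕ Fin m))
    (hg : ∀ z, g z = (Sum.elim (fun _ => (0 : ℂ)) (fun j => f z j) : Fin k ⊕ Fin m → ℂ)) :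
    ∀ ψ : EuclideanSpace ℂ (Fin k ⊕ Fin m) → EuclideanSpace ℂ (Fin k ⊕ Fin m), IsBallAut ψ →
      ((∀ z ∈ ball (0 : EuclideanSpace ℂ (Fin n)) 1, ψ (g z) = g z) ↔
        ∃ V : EuclideanSpace ℂ (Fin k) ≃ₗᵢ[ℂ] EuclideanSpace ℂ (Fin k),
          ∀ w ∈ ball (0 : EuclideanSpace ℂ (Fin k ⊕ Fin m)) 1,
            ψ w = (Sum.elim
              (fun a => V ((WithLp.toLp 2 (fun b => w (Sum.inl b))) : EuclideanSpace ℂ (Fin k)) a)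
              (fun c => w (Sum.inr c)) : Fin k ⊕ Fin m → ℂ)) := by
  intro ψ hψ
  have hg_eq (z) : g z = EuclideanSpace.sumInr (f z) := WithLp.ofLp_injective 2 (hg z)
  have hg_ball (z) (hz : z ∈ ball (0 : EuclideanSpace ℂ (Fin n)) 1) :
      g z ∈ ball (0 : EuclideanSpace ℂ (Fin k ⊕ Fin m)) 1 := by
    simpa [hg_eq] using hfm hz
  constructor
  · intro hfix
    have hψ0 : ψ 0 = 0 := by simpa [hg_eq, hf0] using hfix 0 (mem_ball_self one_pos)
    obtain ⟨A, hA⟩ := hψ.exists_linearIsometry_eqOn hψ0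
    have hspan : Submodule.span ℂ (f '' ball 0 1) = ⊤ :=
      Submodule.span_eq_top_of_forall_affineSubspace fun t ht =>
        hmin t fun z hz => ht (mem_image_of_mem f hz)
    have hAM : A.toLinearMap ∘ₗ EuclideanSpace.sumInr.toLinearMap =
        (EuclideanSpace.sumInr (ι := Fin k)).toLinearMap := by
      refine LinearMap.ext_on hspan ?_
      rintro _ ⟨z, hz, rfl⟩
      simpa [← hg_eq, ← hA (hg_ball z hz)] using hfix z hz
    obtain ⟨V, hV⟩ := A.exists_eq_sumElim_of_comp_sumInr fun u => LinearMap.congr_fun hAM u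
    exact ⟨V, fun w hw => by rw [hA hw]; exact hV w⟩
  · rintro ⟨V, hV⟩ z hz
    apply WithLp.ofLp_injective 2
    rw [hV _ (hg_ball z hz), hg z]
    ext (i | j)
    · change V 0 i = 0
      simp
    · rfl

/-- for minimal `f : 𝔹ⁿ → 𝔹ᵐ` with `f 0 = 0` and `g = 0 ⊕ f : 𝔹ⁿ → 𝔹ᴺ`
(`N = k + m`, modeled by the index type `Fin k ⊕ Fin m`), the automorphisms `ψ` of `𝔹ᴺ`
with `ψ ∘ g = g` are exactly the block unitaries `V ⊕ I_m`, `V ∈ U(k)`. -/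
theorem stmt6 {n m k : ℕ} (hk : 1 ≤ k)
    (f : EuclideanSpace ℂ (Fin n) → EuclideanSpace ℂ (Fin m))
    (hf : DifferentiableOn ℂ f (ball (0 : EuclideanSpace ℂ (Fin n)) 1))
    (hfm : MapsTo f (ball (0 : EuclideanSpace ℂ (Fin n)) 1) (ball (0 : EuclideanSpace ℂ (Fin m)) 1))
    (hf0 : f 0 = 0)
    (hmin : ∀ s : AffineSubspace ℂ (EuclideanSpace ℂ (Fin m)),
      (∀ z ∈ ball (0 : EuclideanSpace ℂ (Fin n)) 1, f z ∈ s) → s = ⊤)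
    (g : EuclideanSpace ℂ (Fin n) → EuclideanSpace ℂ (Fin k ⊕ Fin m))
    (hg : ∀ z, g z = (Sum.elim (fun _ => (0 : ℂ)) (fun j => f z j) : Fin k ⊕ Fin m → ℂ)) :
    ∀ ψ : EuclideanSpace ℂ (Fin k ⊕ Fin m) → EuclideanSpace ℂ (Fin k ⊕ Fin m), IsBallAut ψ →
      ((∀ z ∈ ball (0 : EuclideanSpace ℂ (Fin n)) 1, ψ (g z) = g z) ↔
        ∃ V : EuclideanSpace ℂ (Fin k) ≃ₗᵢ[ℂ] EuclideanSpace ℂ (Fin k),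
          ∀ w ∈ ball (0 : EuclideanSpace ℂ (Fin k ⊕ Fin m)) 1,
            ψ w = (Sum.elim
              (fun a => V ((WithLp.toLp 2 (fun b => w (Sum.inl b))) : EuclideanSpace ℂ (Fin k)) a)
              (fun c => w (Sum.inr c)) : Fin k ⊕ Fin m → ℂ)) :=
  stmt6_general f hfm hf0 hmin g hg
end
end

section
/- Let H : Ω → ℂᴺ be holomorphic on a ball Ω about 0 in ℂⁿ with power series H(z) = Σ_α C_α z^α. If ‖H(γz)‖² = ‖H(z)‖² for all diagonal unitary γ and all z, then ⟨C_α, C_β⟩ = 0 for all multi-indices α ≠ β. -/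
noncomputable section
open Metric Set

/-! For `z` with positive real coordinates `s`, expanding `‖H(e^{iθ}z)‖²` as a double series
gives the trigonometric series `∑_{α,β} ⟪C_α, C_β⟫ s^{α+β} e^{i⟨β-α, θ⟩}` in `θ`. It is constant
in `θ`, so integrating over the torus kills every frequency `k ≠ 0`:
`∑_{β'-α'=k} ⟪C_α', C_β'⟫ s^{α'+β'} = 0` for all small `s`. Within a fixed frequency,
`α' + β'` determines `(α', β')`, so this is a convergent power series in `s` vanishing on a box,
and all its coefficients vanish. -/

open Filter Topology MeasureTheory Complex
open scoped Real ComplexConjugate InnerProductSpace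

theorem integral_Ioc_cexp_int_mul_I (m : ℤ) :
    ∫ t in Ioc 0 (2 * π), cexp (m * t * I) = if m = 0 then ((2 * π : ℝ) : ℂ) else 0 := by
  rw [← intervalIntegral.integral_of_le Real.two_pi_pos.le]
  split_ifs with hm
  · simp [hm]
  · have hc : (m : ℂ) * I ≠ 0 := mul_ne_zero (by exact_mod_cast hm) I_ne_zero
    simp_rw [mul_right_comm _ _ I]
    rw [integral_exp_mul_complex hc]
    have : (m : ℂ) * I * ((2 * π : ℝ) : ℂ) = m * (2 * π * I) := by push_cast; ring
    rw [this, exp_int_mul_two_pi_mul_I]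
    simp

section Torus

variable {d : Type*} [Fintype d]

/-- The character `θ ↦ e^{i⟨k, θ⟩}` of the torus `(ℝ / 2πℤ)^d`, as a function on `d → ℝ`. -/
def torusChar (k : d → ℤ) (θ : d → ℝ) : ℂ := ∏ j, cexp (k j * θ j * I)

def torusMeasure (d : Type*) [Fintype d] : Measure (d → ℝ) :=
  Measure.pi fun _ => volume.restrict (Ioc 0 (2 * π))

instance : IsFiniteMeasure (torusMeasure d) := by
  unfold torusMeasure
  infer_instance

theorem torusChar_add (k m : d → ℤ) (θ : d → ℝ) :
    torusChar (k + m) θ = torusChar k θ * torusChar m θ := by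
  simp only [torusChar, ← Finset.prod_mul_distrib, ← Complex.exp_add]
  congr! 2 with j
  push_cast [Pi.add_apply]
  ring

theorem torusChar_neg (k : d → ℤ) (θ : d → ℝ) : torusChar (-k) θ = conj (torusChar k θ) := by
  simp only [torusChar, map_prod, ← Complex.exp_conj, Pi.neg_apply]
  push_cast
  simp [conj_ofReal, conj_I]

theorem norm_torusChar (k : d → ℤ) (θ : d → ℝ) : ‖torusChar k θ‖ = 1 := by
  simp only [torusChar, norm_prod]
  refine Finset.prod_eq_one fun j _ => ?_
  exact_mod_cast Complex.norm_exp_ofReal_mul_I (k j * θ j)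

theorem continuous_torusChar (k : d → ℤ) : Continuous (torusChar k) := by
  unfold torusChar
  fun_prop

theorem integrable_torusChar (k : d → ℤ) : Integrable (torusChar k) (torusMeasure d) :=
  .of_bound (continuous_torusChar k).aestronglyMeasurable 1
    (ae_of_all _ fun θ => (norm_torusChar k θ).le)

theorem integral_torusChar (k : d → ℤ) :
    ∫ θ, torusChar k θ ∂torusMeasure d =
      if k = 0 then ((2 * π : ℝ) : ℂ) ^ Fintype.card d else 0 := by
  simp only [torusMeasure, torusChar]
  rw [integral_fintype_prod_eq_prod (f := fun j (t : ℝ) => cexp (k j * t * I))]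
  simp only [integral_Ioc_cexp_int_mul_I]
  split_ifs with hk
  · simp [hk]
  · obtain ⟨j, hj⟩ := Function.ne_iff.1 hk
    exact Finset.prod_eq_zero (Finset.mem_univ j) (if_neg hj)

theorem prod_exp_mul_pow (θ : d → ℝ) (z : d → ℂ) (γ : d → ℕ) :
    ∏ j, (cexp (I * θ j) * z j) ^ γ j = torusChar (fun j => (γ j : ℤ)) θ * ∏ j, z j ^ γ j := by
  simp only [torusChar, ← Finset.prod_mul_distrib, mul_pow, ← Complex.exp_nat_mul]
  congr! 3 with j
  push_cast
  ring

theorem tsum_subtype_eq_zero_of_tsum_mul_torusChar_eq_const {ι : Type*} [Countable ι]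
    {a : ι → ℂ} (ha : Summable fun i => ‖a i‖) (κ : ι → d → ℤ) {c : ℂ}
    (h : ∀ θ, ∑' i, a i * torusChar (κ i) θ = c) {k : d → ℤ} (hk : k ≠ 0) :
    ∑' i : {i // κ i = k}, a i = 0 := by
  set F : ι → (d → ℝ) → ℂ := fun i θ => a i * torusChar (κ i - k) θ
  have hF : ∀ θ, ∑' i, F i θ = c * torusChar (-k) θ := fun θ => by
    simp only [F, sub_eq_add_neg, torusChar_add, ← mul_assoc, tsum_mul_right, h]
  have hF_int : ∀ i, Integrable (F i) (torusMeasure d) := fun i =>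
    (integrable_torusChar _).const_mul (a i)
  have hF_norm : Summable fun i => ∫ θ, ‖F i θ‖ ∂torusMeasure d := by
    simpa [F, norm_torusChar] using ha.mul_left ((torusMeasure d).real univ)
  have hswap := integral_tsum_of_summable_integral_norm hF_int hF_norm
  simp only [hF, integral_const_mul, integral_torusChar, neg_eq_zero, hk, if_false, mul_zero,
    F, sub_eq_zero] at hswap
  have hT : ((2 * π : ℝ) : ℂ) ^ Fintype.card d ≠ 0 :=
    pow_ne_zero _ (ofReal_ne_zero.2 Real.two_pi_pos.ne')
  change ∑' i : ({i | κ i = k} : Set ι), a i = 0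
  rw [tsum_subtype]
  refine (mul_eq_zero.1 ?_).resolve_left hT
  rw [← tsum_mul_left, ← hswap]
  refine tsum_congr fun i => ?_
  simp only [Set.indicator_apply, Set.mem_ofPred_eq]
  split_ifs <;> ring

end Torus

theorem hasSum_inner_prod {𝕜 E ι ι' : Type*} [RCLike 𝕜] [NormedAddCommGroup E]
    [InnerProductSpace 𝕜 E] {f : ι → E} {g : ι' → E} {x y : E} (hf : HasSum f x)
    (hg : HasSum g y) (hf' : Summable (‖f ·‖)) (hg' : Summable (‖g ·‖)) :
    HasSum (fun p : ι × ι' => ⟪f p.1, g p.2⟫_𝕜) ⟪x, y⟫_𝕜 := by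
  have hs : Summable fun p : ι × ι' => ⟪f p.1, g p.2⟫_𝕜 :=
    .of_norm_bounded (hf'.mul_of_nonneg hg' (fun _ => norm_nonneg _) fun _ => norm_nonneg _)
      fun p => norm_inner_le_norm _ _
  convert hs.hasSum
  rw [hs.tsum_prod, ← innerSLFlip_apply_apply, ← ((innerSLFlip 𝕜 y).hasSum hf).tsum_eq]
  refine tsum_congr fun i => ?_
  rw [innerSLFlip_apply_apply, ← innerSL_apply_apply, ← ((innerSL 𝕜 (f i)).hasSum hg).tsum_eq]
  rfl

theorem tsum_inner_eq_zero_of_norm_tsum_torusChar_smul_eq {d ι E : Type*} [Fintype d]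
    [Countable ι] [NormedAddCommGroup E] [InnerProductSpace ℂ E] [CompleteSpace E] {f : ι → E}
    (hf : Summable (‖f ·‖)) (m : ι → d → ℤ)
    (h : ∀ θ, ‖∑' i, torusChar (m i) θ • f i‖ = ‖∑' i, f i‖) {k : d → ℤ} (hk : k ≠ 0) :
    ∑' p : {p : ι × ι // m p.2 - m p.1 = k}, ⟪f p.1.1, f p.1.2⟫_ℂ = 0 := by
  have hgram : Summable fun p : ι × ι => ‖⟪f p.1, f p.2⟫_ℂ‖ :=
    (hf.mul_of_nonneg hf (fun _ => norm_nonneg _) fun _ => norm_nonneg _).of_nonneg_of_le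
      (fun _ => norm_nonneg _) fun p => norm_inner_le_norm (f p.1) (f p.2)
  refine tsum_subtype_eq_zero_of_tsum_mul_torusChar_eq_const hgram (fun p => m p.2 - m p.1)
    (c := ⟪∑' i, f i, ∑' i, f i⟫_ℂ) (fun θ => ?_) hk
  have hrot : Summable fun i => ‖torusChar (m i) θ • f i‖ := by
    simpa [norm_smul, norm_torusChar] using hf
  rw [inner_self_eq_norm_sq_to_K, ← h θ, ← inner_self_eq_norm_sq_to_K,
    ← (hasSum_inner_prod hrot.of_norm.hasSum hrot.of_norm.hasSum hrot hrot).tsum_eq]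
  refine tsum_congr fun p => ?_
  rw [inner_smul_left, inner_smul_right, sub_eq_add_neg, torusChar_add, torusChar_neg]
  ring

theorem eq_zero_of_tsum_mul_pow_eq_zero_on_Ioo (b : ℕ → ℂ) {ρ : ℝ} (hρ : 0 < ρ)
    (hb : Summable fun k => ‖b k‖ * ρ ^ k)
    (h : ∀ s ∈ Ioo 0 ρ, ∑' k, b k * (s : ℂ) ^ k = 0) : b = 0 := by
  set p := FormalMultilinearSeries.ofScalars ℂ b
  have hp : ((ρ.toNNReal : NNReal) : ENNReal) ≤ p.radius :=
    p.le_radius_of_summable_norm (by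
      simpa [p, FormalMultilinearSeries.ofScalars_norm, Real.coe_toNNReal _ hρ.le] using hb)
  have hpos : 0 < p.radius := lt_of_lt_of_le (by simpa using hρ) hp
  have hfreq : ∃ᶠ z in 𝓝[≠] (0 : ℂ), p.sum z = 0 := by
    have hlim : Tendsto (fun s : ℝ => (s : ℂ)) (𝓝[>] 0) (𝓝[≠] 0) :=
      tendsto_nhdsWithin_of_tendsto_nhds_of_eventually_within _
        ((Complex.continuous_ofReal.tendsto' 0 0 (by simp)).mono_left nhdsWithin_le_nhds)
        (eventually_nhdsWithin_of_forall fun s hs => by simpa using ne_of_gt hs)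
    refine hlim.frequently (Eventually.frequently ?_)
    filter_upwards [Ioo_mem_nhdsGT hρ] with s hs
    simpa [p, FormalMultilinearSeries.sum, mul_comm] using h s hs
  have hzero := (p.hasFPowerSeriesOnBall hpos).hasFPowerSeriesAt.eq_zero_of_eventually
    ((p.hasFPowerSeriesOnBall hpos).analyticAt.frequently_zero_iff_eventually_zero.1 hfreq)
  exact (FormalMultilinearSeries.ofScalars_series_eq_zero ℂ).1 hzero

theorem norm_mul_prod_pow_le {ι : Type*} [Fintype ι] {ρ : ℝ} {s : ι → ℝ}
    (hs : ∀ j, s j ∈ Ioo 0 ρ) (c : ℂ) (γ : ι → ℕ) :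
    ‖c * ∏ j, (s j : ℂ) ^ γ j‖ ≤ ‖c‖ * ∏ j, ρ ^ γ j := by
  rw [norm_mul, norm_prod]
  gcongr with j
  rw [norm_pow, Complex.norm_real, Real.norm_of_nonneg (hs j).1.le]
  exact pow_le_pow_left₀ (hs j).1.le (hs j).2.le _

theorem eq_zero_of_tsum_mul_prod_pow_eq_zero_on_box {n : ℕ} (b : (Fin n → ℕ) → ℂ) {ρ : ℝ}
    (hρ : 0 < ρ) (hb : Summable fun γ => ‖b γ‖ * ∏ j, ρ ^ γ j)
    (h : ∀ s : Fin n → ℝ, (∀ j, s j ∈ Ioo 0 ρ) → ∑' γ, b γ * ∏ j, (s j : ℂ) ^ γ j = 0) :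
    b = 0 := by
  induction n with
  | zero =>
    funext γ
    have := h default finZeroElim
    rwa [tsum_eq_single γ fun γ' hγ' => (hγ' (Subsingleton.elim _ _)).elim, Fin.prod_univ_zero,
      mul_one] at this
  | succ n ih =>
    have hcons : Summable fun q : ℕ × (Fin n → ℕ) =>
        ρ ^ q.1 * (‖b (Fin.cons q.1 q.2)‖ * ∏ j, ρ ^ q.2 j) := by
      refine (hb.comp_injective Fin.cons_injective2.uncurry).congr fun ⟨k, γ⟩ => ?_
      simp only [Function.comp_apply, Function.uncurry_apply_pair, Fin.prod_univ_succ,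
        Fin.cons_zero, Fin.cons_succ]
      ring
    have hrow : ∀ k, Summable fun γ => ‖b (Fin.cons k γ)‖ * ∏ j, ρ ^ γ j := fun k =>
      (summable_mul_left_iff (pow_ne_zero k hρ.ne')).1 (hcons.prod_factor k)
    suffices hslice : ∀ k, (fun γ => b (Fin.cons k γ)) = 0 by
      funext γ
      simpa using congrFun (hslice (γ 0)) (Fin.tail γ)
    intro k
    -- for fixed `s'`, the row sums form a one-variable power series in the first coordinate
    refine ih _ (hrow k) fun s' hs' => congrFun (eq_zero_of_tsum_mul_pow_eq_zero_on_Ioo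
        (fun k => ∑' γ, b (Fin.cons k γ) * ∏ j, (s' j : ℂ) ^ γ j) hρ ?_ fun s₀ hs₀ => ?_) k
    · have hrow' : ∀ k, Summable fun γ => ‖b (Fin.cons k γ) * ∏ j, (s' j : ℂ) ^ γ j‖ := fun k =>
        (hrow k).of_nonneg_of_le (fun _ => norm_nonneg _) fun γ => norm_mul_prod_pow_le hs' _ γ
      refine hcons.prod.of_nonneg_of_le (fun _ => by positivity) fun k => ?_
      dsimp only
      rw [tsum_mul_left, mul_comm]
      gcongr
      exact (norm_tsum_le_tsum_norm (hrow' k)).trans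
        ((hrow' k).tsum_le_tsum (fun γ => norm_mul_prod_pow_le hs' _ γ) (hrow k))
    · have hs : ∀ j, (Fin.cons s₀ s' : Fin (n + 1) → ℝ) j ∈ Ioo 0 ρ := Fin.cases hs₀ hs'
      have hsum := (Fin.consEquiv fun _ => ℕ).summable_iff.2 <|
        Summable.of_norm_bounded hb fun γ => norm_mul_prod_pow_le hs (b γ) γ
      simp only [Function.comp_def] at hsum
      rw [← h _ hs, ← (Fin.consEquiv fun _ => ℕ).tsum_eq, hsum.tsum_prod]
      refine tsum_congr fun k => ?_
      rw [← tsum_mul_right]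
      refine tsum_congr fun γ => ?_
      simp only [Fin.consEquiv, Equiv.coe_fn_mk, Fin.prod_univ_succ, Fin.cons_zero, Fin.cons_succ]
      ring

theorem Function.extend_zero_apply_comp {α β M N : Type*} [Zero M] [Zero N] (e : α → β)
    (a : α → M) (F : M → β → N) (hF : ∀ b, F 0 b = 0) (b : β) :
    Function.extend e (fun i => F (a i) (e i)) 0 b = F (Function.extend e a 0 b) b := by
  classical
  simp only [Function.extend_def]
  split_ifs with h
  · rw [Classical.choose_spec h]
  · exact (hF b).symm

theorem eq_zero_of_tsum_mul_prod_pow_comp_eq_zero_on_box {ι : Type*} {n : ℕ}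
    {e : ι → Fin n → ℕ} (he : Function.Injective e) (a : ι → ℂ) {ρ : ℝ} (hρ : 0 < ρ)
    (ha : Summable fun i => ‖a i‖ * ∏ j, ρ ^ e i j)
    (h : ∀ s : Fin n → ℝ, (∀ j, s j ∈ Ioo 0 ρ) → ∑' i, a i * ∏ j, (s j : ℂ) ^ e i j = 0) :
    a = 0 := by
  have hext := eq_zero_of_tsum_mul_prod_pow_eq_zero_on_box (Function.extend e a 0) hρ ?_ ?_
  · funext i
    simpa [he.extend_apply] using congrFun hext (e i)
  · exact ((summable_extend_zero he).2 ha).congr fun γ =>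
      Function.extend_zero_apply_comp e a (fun c γ => ‖c‖ * ∏ j, ρ ^ γ j) (by simp) γ
  · intro s hs
    calc ∑' γ, Function.extend e a 0 γ * ∏ j, (s j : ℂ) ^ γ j
        = ∑' γ, Function.extend e (fun i => a i * ∏ j, (s j : ℂ) ^ e i j) 0 γ :=
          tsum_congr fun γ => (Function.extend_zero_apply_comp e a
            (fun c γ => c * ∏ j, (s j : ℂ) ^ γ j) (by simp) γ).symm
      _ = 0 := (tsum_extend_zero he _).trans (h s hs)

theorem EuclideanSpace.norm_le_norm_of_forall_norm_le {𝕜 ι : Type*} [RCLike 𝕜] [Fintype ι]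
    {v w : EuclideanSpace 𝕜 ι} (h : ∀ j, ‖v j‖ ≤ ‖w j‖) : ‖v‖ ≤ ‖w‖ := by
  rw [EuclideanSpace.norm_eq, EuclideanSpace.norm_eq]
  gcongr with j
  exact h j

theorem EuclideanSpace.exists_pos_forall_norm_le_mem_ball {𝕜 ι : Type*} [RCLike 𝕜] [Fintype ι]
    {r : ℝ} (hr : 0 < r) :
    ∃ ρ : ℝ, 0 < ρ ∧ ∀ v : EuclideanSpace 𝕜 ι, (∀ j, ‖v j‖ ≤ ρ) → v ∈ ball 0 r := by
  have hcont : Continuous fun t : ℝ => (WithLp.toLp 2 fun _ => (t : 𝕜) : EuclideanSpace 𝕜 ι) := by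
    fun_prop
  have h0 : ∀ᶠ t : ℝ in 𝓝 0, (WithLp.toLp 2 fun _ => (t : 𝕜) : EuclideanSpace 𝕜 ι) ∈ ball 0 r :=
    hcont.continuousAt.preimage_mem_nhds (isOpen_ball.mem_nhds (by
      simpa [← Pi.zero_def] using mem_ball_self (x := (0 : EuclideanSpace 𝕜 ι)) hr))
  obtain ⟨ρ, hρr, hρ⟩ := ((h0.filter_mono nhdsWithin_le_nhds).and
    (self_mem_nhdsWithin (s := Ioi 0))).exists
  refine ⟨ρ, hρ, fun v hv => ?_⟩
  rw [mem_ball_zero_iff] at hρr ⊢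
  refine lt_of_le_of_lt (EuclideanSpace.norm_le_norm_of_forall_norm_le fun j => ?_) hρr
  simpa [abs_of_pos (show 0 < ρ from hρ)] using hv j

/-- The diagonal unitary `diag (e^{iθⱼ})` applied to `z`. -/
def torusRotate {d : Type*} (θ : d → ℝ) (z : EuclideanSpace ℂ d) : EuclideanSpace ℂ d :=
  WithLp.toLp 2 fun j => cexp (I * θ j) * z j

theorem norm_torusRotate_apply {d : Type*} (θ : d → ℝ) (z : EuclideanSpace ℂ d) (j : d) :
    ‖torusRotate θ z j‖ = ‖z j‖ := by
  simp [torusRotate, mul_comm I, Complex.norm_exp_ofReal_mul_I]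

theorem injective_add_of_sub_eq {d : Type*} (k : d → ℤ) :
    Function.Injective fun p : {p : (d → ℕ) × (d → ℕ) //
      (fun j => (p.2 j : ℤ)) - (fun j => (p.1 j : ℤ)) = k} => p.1.1 + p.1.2 := by
  intro p q hpq
  refine Subtype.ext (Prod.ext (funext fun j => ?_) (funext fun j => ?_)) <;>
  · have h₁ := congrFun hpq j
    have h₂ := congrFun p.2 j
    have h₃ := congrFun q.2 j
    simp only [Pi.add_apply, Pi.sub_apply] at h₁ h₂ h₃
    omega

section PowerSeries

variable {d : Type*} [Fintype d] {F : Type*} [NormedAddCommGroup F] [InnerProductSpace ℂ F]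

theorem torusRotate_mem_ball {r : ℝ} (θ : d → ℝ) {z : EuclideanSpace ℂ d}
    (hz : z ∈ ball (0 : EuclideanSpace ℂ d) r) : torusRotate θ z ∈ ball 0 r := by
  rw [mem_ball_zero_iff] at hz ⊢
  exact lt_of_le_of_lt (EuclideanSpace.norm_le_norm_of_forall_norm_le fun j =>
    (norm_torusRotate_apply θ z j).le) hz

theorem tsum_conj_mul_inner_eq_zero_of_norm_torusRotate_eq {U : Set (EuclideanSpace ℂ d)}
    [CompleteSpace F] (hU : ∀ θ, ∀ z ∈ U, torusRotate θ z ∈ U) (H : EuclideanSpace ℂ d → F)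
    (C : (d → ℕ) → F) (habs : ∀ z ∈ U, Summable fun γ => ‖C γ‖ * ∏ j, ‖z j‖ ^ γ j)
    (hser : ∀ z ∈ U, HasSum (fun γ => (∏ j, z j ^ γ j) • C γ) (H z))
    (hinv : ∀ θ, ∀ z ∈ U, ‖H (torusRotate θ z)‖ ^ 2 = ‖H z‖ ^ 2) {z : EuclideanSpace ℂ d}
    (hz : z ∈ U) {k : d → ℤ} (hk : k ≠ 0) :
    ∑' p : {p : (d → ℕ) × (d → ℕ) // (fun j => (p.2 j : ℤ)) - (fun j => (p.1 j : ℤ)) = k},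
      conj (∏ j, z j ^ p.1.1 j) * (∏ j, z j ^ p.1.2 j) * ⟪C p.1.1, C p.1.2⟫_ℂ = 0 := by
  set f : (d → ℕ) → F := fun γ => (∏ j, z j ^ γ j) • C γ
  have hf : Summable (‖f ·‖) := by
    simpa [f, norm_smul, norm_prod, mul_comm] using habs z hz
  have hnorm : ∀ θ, ‖∑' γ, torusChar (fun j => (γ j : ℤ)) θ • f γ‖ = ‖∑' γ, f γ‖ := fun θ => by
    have hrot : ∑' γ, torusChar (fun j => (γ j : ℤ)) θ • f γ = H (torusRotate θ z) := by
      rw [← (hser _ (hU θ z hz)).tsum_eq]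
      refine tsum_congr fun γ => ?_
      simp only [f, smul_smul, torusRotate, PiLp.toLp_apply, prod_exp_mul_pow]
    rw [hrot, (hser z hz).tsum_eq]
    exact (pow_left_inj₀ (norm_nonneg _) (norm_nonneg _) two_ne_zero).1 (hinv θ z hz)
  rw [← tsum_inner_eq_zero_of_norm_tsum_torusChar_smul_eq hf _ hnorm hk]
  refine tsum_congr fun p => ?_
  simp only [f, inner_smul_left, inner_smul_right]
  ring

theorem summable_norm_inner_mul_prod_pow {ι : Type*} {C : (d → ℕ) → F} {ρ : ℝ} (hρ : 0 ≤ ρ)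
    (hC : Summable fun γ => ‖C γ‖ * ∏ j, ρ ^ γ j) {ν : ι → (d → ℕ) × (d → ℕ)}
    (hν : Function.Injective ν) :
    Summable fun i => ‖⟪C (ν i).1, C (ν i).2⟫_ℂ‖ * ∏ j, ρ ^ ((ν i).1 + (ν i).2) j := by
  refine ((hC.mul_of_nonneg hC (fun _ => by positivity) fun _ => by positivity).comp_injective
    hν).of_nonneg_of_le (fun _ => by positivity) fun i => ?_
  calc ‖⟪C (ν i).1, C (ν i).2⟫_ℂ‖ * ∏ j, ρ ^ ((ν i).1 + (ν i).2) j
      ≤ ‖C (ν i).1‖ * ‖C (ν i).2‖ * ∏ j, ρ ^ ((ν i).1 + (ν i).2) j := by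
        gcongr
        exact norm_inner_le_norm _ _
    _ = (‖C (ν i).1‖ * ∏ j, ρ ^ (ν i).1 j) * (‖C (ν i).2‖ * ∏ j, ρ ^ (ν i).2 j) := by
        simp only [Pi.add_apply, pow_add, Finset.prod_mul_distrib]
        ring

end PowerSeries

/-- if `H(z) = Σ_α C_α z^α` is a convergent power series on a ball about `0`
and `‖H(γ z)‖² = ‖H(z)‖²` for every diagonal unitary `γ`, then the coefficient vectors are
pairwise orthogonal. -/
theorem stmt13 {n N : ℕ} (r : ℝ) (hr : 0 < r)
    (H : EuclideanSpace ℂ (Fin n) → EuclideanSpace ℂ (Fin N))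
    (C : (Fin n → ℕ) → EuclideanSpace ℂ (Fin N))
    (habs : ∀ z ∈ ball (0 : EuclideanSpace ℂ (Fin n)) r,
      Summable (fun α : Fin n → ℕ => ‖C α‖ * ∏ j, ‖z j‖ ^ α j))
    (hser : ∀ z ∈ ball (0 : EuclideanSpace ℂ (Fin n)) r,
      HasSum (fun α : Fin n → ℕ => (∏ j, z j ^ α j) • C α) (H z))
    (hinv : ∀ θ : Fin n → ℝ, ∀ z ∈ ball (0 : EuclideanSpace ℂ (Fin n)) r,
      ‖H (WithLp.toLp 2 (fun j => Complex.exp (Complex.I * θ j) * z j : Fin n → ℂ))‖ ^ 2 = ‖H z‖ ^ 2) :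
    ∀ α β : Fin n → ℕ, α ≠ β → (inner ℂ (C α) (C β) : ℂ) = 0 := by
  intro α β hαβ
  obtain ⟨ρ, hρ, hbox⟩ := EuclideanSpace.exists_pos_forall_norm_le_mem_ball (𝕜 := ℂ) (ι := Fin n) hr
  have hk : (fun j => (β j : ℤ)) - (fun j => (α j : ℤ)) ≠ 0 := fun h =>
    hαβ (funext fun j => by simpa [sub_eq_zero, eq_comm] using congrFun h j)
  have hC : Summable fun γ => ‖C γ‖ * ∏ j, ρ ^ γ j := by
    simpa [abs_of_pos hρ] using habs (WithLp.toLp 2 fun _ => (ρ : ℂ))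
      (hbox _ fun j => by simp [abs_of_pos hρ])
  refine congrFun (eq_zero_of_tsum_mul_prod_pow_comp_eq_zero_on_box (injective_add_of_sub_eq _)
    _ hρ (summable_norm_inner_mul_prod_pow hρ.le hC Subtype.val_injective) fun s hs => ?_)
    ⟨(α, β), rfl⟩
  have hz : (WithLp.toLp 2 fun j => (s j : ℂ) : EuclideanSpace ℂ (Fin n)) ∈ ball 0 r :=
    hbox _ fun j => by simp [abs_of_pos (hs j).1, (hs j).2.le]
  rw [← tsum_conj_mul_inner_eq_zero_of_norm_torusRotate_eq (fun θ _ => torusRotate_mem_ball θ)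
    H C habs hser hinv hz hk]
  refine tsum_congr fun p => ?_
  simp only [map_prod, map_pow, conj_ofReal, Pi.add_apply, pow_add, Finset.prod_mul_distrib]
  ring
end
end

section
/- Let f : Ω → ℂᴺ be holomorphic on a ball Ω about 0 in ℂⁿ, with Taylor expansion f(z) = Σ_α c_α z^α. Let m = (m₁,...,mₙ) be real numbers, all positive, and suppose ⟨c_α, c_β⟩ · (m·(α − β)) = 0 for all multi-indices α, β. Then all but finitely many coefficient vectors c_α vanish; i.e., f is a polynomial map. -/
noncomputable section
open Metric Set

/-!
Coefficients `c α`, `c β` whose weights `m·α`, `m·β` differ are orthogonal. Choosing one nonzero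
coefficient for each weight that occurs gives an orthogonal, hence linearly independent, family
in `ℂᴺ`, so only finitely many weights occur. Since `m` is positive, each weight is attained by
only finitely many multi-indices.
-/

def multiIndexWeight {ι : Type*} [Fintype ι] (m : ι → ℝ) (α : ι → ℕ) : ℝ :=
  ∑ j, m j * α j

theorem multiIndexWeight_sub {ι : Type*} [Fintype ι] (m : ι → ℝ) (α β : ι → ℕ) :
    ∑ j, m j * ((α j : ℝ) - β j) = multiIndexWeight m α - multiIndexWeight m β := by
  simp only [multiIndexWeight, mul_sub, Finset.sum_sub_distrib]

theorem finite_setOf_multiIndexWeight_eq {ι : Type*} [Fintype ι] {m : ι → ℝ}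
    (hm : ∀ j, 0 < m j) (t : ℝ) : {α : ι → ℕ | multiIndexWeight m α = t}.Finite := by
  refine (Set.Finite.pi fun j => Set.finite_Iic ⌊t / m j⌋₊).subset fun α hα j _ => ?_
  have hle : m j * α j ≤ t := hα ▸ Finset.single_le_sum (f := fun j => m j * (α j : ℝ))
    (fun i _ => mul_nonneg (hm i).le (Nat.cast_nonneg _)) (Finset.mem_univ j)
  exact Nat.le_floor ((le_div_iff₀' (hm j)).mpr hle)

theorem finite_image_setOf_ne_zero_of_inner_eq_zero {𝕜 E ι κ : Type*} [RCLike 𝕜]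
    [NormedAddCommGroup E] [InnerProductSpace 𝕜 E] [FiniteDimensional 𝕜 E]
    (c : ι → E) (w : ι → κ) (horth : ∀ α β, w α ≠ w β → inner 𝕜 (c α) (c β) = 0) :
    (w '' {α | c α ≠ 0}).Finite := by
  choose rep hrep using fun t : w '' {α | c α ≠ 0} => t.2
  have hli : LinearIndependent 𝕜 fun t => c (rep t) := by
    refine linearIndependent_of_ne_zero_of_inner_eq_zero (fun t => (hrep t).1) fun s t hst => ?_
    exact horth _ _ fun h => hst (Subtype.ext ((hrep s).2.symm.trans (h.trans (hrep t).2)))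
  have := hli.finite
  exact Set.toFinite _

theorem finite_setOf_ne_zero_of_inner_eq_zero {𝕜 E ι κ : Type*} [RCLike 𝕜]
    [NormedAddCommGroup E] [InnerProductSpace 𝕜 E] [FiniteDimensional 𝕜 E]
    (c : ι → E) (w : ι → κ) (horth : ∀ α β, w α ≠ w β → inner 𝕜 (c α) (c β) = 0)
    (hfib : ∀ t, {α | w α = t}.Finite) : {α | c α ≠ 0}.Finite :=
  ((finite_image_setOf_ne_zero_of_inner_eq_zero c w horth).preimage' fun t _ => hfib t).subset
    (Set.subset_preimage_image w _)

theorem stmt16_general {n N : ℕ} (r : ℝ)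
    (f : EuclideanSpace ℂ (Fin n) → EuclideanSpace ℂ (Fin N))
    (c : (Fin n → ℕ) → EuclideanSpace ℂ (Fin N))
    (hser : ∀ z ∈ ball (0 : EuclideanSpace ℂ (Fin n)) r,
      HasSum (fun α : Fin n → ℕ => (∏ j, z j ^ α j) • c α) (f z))
    (m : Fin n → ℝ) (hm : ∀ j, 0 < m j)
    (horth : ∀ α β : Fin n → ℕ,
      (inner ℂ (c α) (c β) : ℂ) * ((∑ j, m j * ((α j : ℝ) - (β j : ℝ)) : ℝ) : ℂ) = 0) :
    {α : Fin n → ℕ | c α ≠ 0}.Finite ∧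
    ∃ S : Finset (Fin n → ℕ), ∀ z ∈ ball (0 : EuclideanSpace ℂ (Fin n)) r,
      f z = ∑ α ∈ S, (∏ j, z j ^ α j) • c α := by
  have hweight : ∀ α β, multiIndexWeight m α ≠ multiIndexWeight m β →
      inner ℂ (c α) (c β) = 0 := fun α β hne => by
    have := horth α β
    rwa [multiIndexWeight_sub, mul_eq_zero, Complex.ofReal_eq_zero, sub_eq_zero,
      or_iff_left hne] at this
  have hfin : {α | c α ≠ 0}.Finite := finite_setOf_ne_zero_of_inner_eq_zero c _ hweight
    (finite_setOf_multiIndexWeight_eq hm)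
  refine ⟨hfin, hfin.toFinset, fun z hz => (hser z hz).unique ?_⟩
  refine hasSum_sum_of_ne_finset_zero fun α hα => ?_
  rw [Set.Finite.mem_toFinset, Set.mem_ofPred_eq, not_not] at hα
  rw [hα, smul_zero]

/-- if `f(z) = Σ_α c_α z^α` on a ball about `0`, `m` has all-positive entries,
and `⟨c_α, c_β⟩ · (m·(α−β)) = 0` for all `α, β`, then only finitely many `c_α` are nonzero
and `f` is a polynomial map. -/
theorem stmt16 {n N : ℕ} (r : ℝ) (hr : 0 < r)
    (f : EuclideanSpace ℂ (Fin n) → EuclideanSpace ℂ (Fin N))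
    (c : (Fin n → ℕ) → EuclideanSpace ℂ (Fin N))
    (habs : ∀ z ∈ ball (0 : EuclideanSpace ℂ (Fin n)) r,
      Summable (fun α : Fin n → ℕ => ‖c α‖ * ∏ j, ‖z j‖ ^ α j))
    (hser : ∀ z ∈ ball (0 : EuclideanSpace ℂ (Fin n)) r,
      HasSum (fun α : Fin n → ℕ => (∏ j, z j ^ α j) • c α) (f z))
    (m : Fin n → ℝ) (hm : ∀ j, 0 < m j)
    (horth : ∀ α β : Fin n → ℕ,
      (inner ℂ (c α) (c β) : ℂ) * ((∑ j, m j * ((α j : ℝ) - (β j : ℝ)) : ℝ) : ℂ) = 0) :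
    {α : Fin n → ℕ | c α ≠ 0}.Finite ∧
    ∃ S : Finset (Fin n → ℕ), ∀ z ∈ ball (0 : EuclideanSpace ℂ (Fin n)) r,
      f z = ∑ α ∈ S, (∏ j, z j ^ α j) • c α :=
  stmt16_general r f c hser m hm horth
end
end

section
/- In dimension n = 1: let f : D → ℂᴺ be holomorphic on a disk D about 0 with ‖f(e^{it}z)‖² = ‖f(z)‖² for all real t and z ∈ D. Then the Taylor coefficient vectors c_k ∈ ℂᴺ of f are pairwise orthogonal, and in particular at most N of them are nonzero, so f is a polynomial with at most N nonzero terms. -/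
noncomputable section
open Metric Set

set_option maxHeartbeats 1000000

private lemma aux_J (n : ℤ) :
    ∫ t in Ioc (0:ℝ) (2*Real.pi), Complex.exp (Complex.I * n * t) =
      if n = 0 then (2*Real.pi : ℂ) else 0 := by
  have h2pi : (0:ℝ) ≤ 2 * Real.pi := by positivity
  split_ifs with hn
  · subst hn
    simp [MeasureTheory.integral_const, Real.volume_Ioc, ENNReal.toReal_ofReal h2pi, max_eq_left h2pi]
  · rw [← intervalIntegral.integral_of_le h2pi]
    have hc : Complex.I * n ≠ 0 := by
      simp [Complex.I_ne_zero, Complex.ext_iff, hn]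
    have h := integral_exp_mul_complex (a := (0:ℝ)) (b := 2*Real.pi) hc
    have heq : ∀ t : ℝ, Complex.I * n * t = (Complex.I * n) * t := fun t => by ring
    rw [show (fun t : ℝ => Complex.exp (Complex.I * n * t)) =
        (fun t : ℝ => Complex.exp ((Complex.I * n) * t)) from rfl, h]
    have : Complex.I * n * ((2*Real.pi : ℝ) : ℂ) = n * (2 * (Real.pi:ℂ) * Complex.I) := by
      push_cast; ring
    rw [this, Complex.exp_int_mul_two_pi_mul_I]
    simp

private lemma aux_coeffs (q : ℕ → ℂ) (ε : ℝ) (hε : 0 < ε)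
    (hsum : Summable fun k => ‖q k‖ * ε ^ k)
    (h : ∀ y : ℝ, 0 < y → y < ε → HasSum (fun k => q k * (y : ℂ) ^ k) 0) :
    ∀ n, q n = 0 := by
  intro n
  induction n using Nat.strong_induction_on with
  | _ n ih =>
  set ε₀ := ε / 2 with hε₀def
  have hε₀pos : 0 < ε₀ := by positivity
  have hε₀lt : ε₀ < ε := by simp only [hε₀def]; linarith
  have h1 : Summable fun k => ‖q k‖ * ε₀ ^ k := by
    refine hsum.of_nonneg_of_le (fun k => by positivity) (fun k => ?_)
    exact mul_le_mul_of_nonneg_left (pow_le_pow_left₀ hε₀pos.le hε₀lt.le k) (norm_nonneg _)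
  have h2 : Summable fun k => ‖q (k + (1 + n))‖ * ε₀ ^ (k + (1 + n)) :=
    h1.comp_injective (add_left_injective (1 + n))
  have hmaj : Summable fun k => ‖q (k + (1 + n))‖ * ε₀ ^ k :=
    (h2.mul_right ((ε₀ ^ (1 + n))⁻¹)).congr fun k => by
      rw [pow_add]; field_simp
  set B := ∑' k, ‖q (k + (1 + n))‖ * ε₀ ^ k with hBdef
  have hB : 0 ≤ B := tsum_nonneg fun k => by positivity
  have key : ∀ y : ℝ, 0 < y → y ≤ ε₀ → ‖q n‖ ≤ y * B := by
    intro y hy hyle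
    have hy' := h y hy (lt_of_le_of_lt hyle hε₀lt)
    have hshift : HasSum (fun k => q (k + n) * (y:ℂ) ^ (k + n)) 0 := by
      rw [show (fun k => q (k + n) * (y:ℂ) ^ (k + n)) =
          (fun k : ℕ => q k * (y:ℂ) ^ k) ∘ (fun k : ℕ => k + n) from rfl,
        Function.Injective.hasSum_iff (add_left_injective n) ?_]
      · exact hy'
      · intro x hx
        have hxn : x < n := by
          by_contra hxn; push_neg at hxn
          exact hx ⟨x - n, by simp; omega⟩
        simp [ih x hxn]
    have hyne : ((y:ℂ)) ^ n ≠ 0 := pow_ne_zero _ (by exact_mod_cast hy.ne')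
    have hshift2 : HasSum (fun k => q (k + n) * (y:ℂ) ^ k) 0 := by
      refine (hasSum_mul_right_iff (f := fun k => q (k + n) * (y:ℂ) ^ k) (a₁ := 0) hyne).1 ?_
      have h0 : (fun k => (q (k + n) * (y:ℂ) ^ k) * (y:ℂ) ^ n)
          = fun k => q (k + n) * (y:ℂ) ^ (k + n) := by
        funext k; rw [pow_add]; ring
      rw [h0, zero_mul]
      exact hshift
    have hsplit : HasSum (fun k => q (k + 1 + n) * (y:ℂ) ^ (k + 1)) (-(q n)) := by
      have h3 := (hasSum_nat_add_iff' (f := fun k => q (k + n) * (y:ℂ) ^ k) (g := 0) 1).2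
        hshift2
      simpa using h3
    have hns : Summable fun k => ‖q (k + 1 + n) * (y:ℂ) ^ (k + 1)‖ := by
      refine (hmaj.mul_left y).of_nonneg_of_le (fun k => norm_nonneg _) (fun k => ?_)
      rw [norm_mul, norm_pow, Complex.norm_real, Real.norm_of_nonneg hy.le]
      calc ‖q (k + 1 + n)‖ * y ^ (k + 1) = y * (‖q (k + 1 + n)‖ * y ^ k) := by ring
        _ ≤ y * (‖q (k + (1 + n))‖ * ε₀ ^ k) := by
            have : k + 1 + n = k + (1 + n) := by omega
            rw [this]
            exact mul_le_mul_of_nonneg_left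
              (mul_le_mul_of_nonneg_left (pow_le_pow_left₀ hy.le hyle k) (norm_nonneg _)) hy.le
    have hb1 : ‖q n‖ ≤ ∑' k, ‖q (k + 1 + n) * (y:ℂ) ^ (k + 1)‖ := by
      calc ‖q n‖ = ‖-(q n)‖ := (norm_neg _).symm
        _ = ‖∑' k, q (k + 1 + n) * (y:ℂ) ^ (k + 1)‖ := by rw [hsplit.tsum_eq]
        _ ≤ _ := norm_tsum_le_tsum_norm hns
    refine hb1.trans ?_
    have hb2 : ∑' k, ‖q (k + 1 + n) * (y:ℂ) ^ (k + 1)‖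
        ≤ ∑' k, y * (‖q (k + (1 + n))‖ * ε₀ ^ k) := by
      refine Summable.tsum_le_tsum (fun k => ?_) hns (hmaj.mul_left y)
      rw [norm_mul, norm_pow, Complex.norm_real, Real.norm_of_nonneg hy.le]
      calc ‖q (k + 1 + n)‖ * y ^ (k + 1) = y * (‖q (k + 1 + n)‖ * y ^ k) := by ring
        _ ≤ y * (‖q (k + (1 + n))‖ * ε₀ ^ k) := by
            have : k + 1 + n = k + (1 + n) := by omega
            rw [this]
            exact mul_le_mul_of_nonneg_left
              (mul_le_mul_of_nonneg_left (pow_le_pow_left₀ hy.le hyle k) (norm_nonneg _)) hy.le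
    refine hb2.trans ?_
    rw [tsum_mul_left]
  have htend : Filter.Tendsto (fun y : ℝ => y * B) (nhdsWithin 0 (Ioi 0)) (nhds 0) := by
    have h0 : Filter.Tendsto (fun y : ℝ => y * B) (nhds 0) (nhds (0 * B)) :=
      (continuous_id.mul continuous_const).tendsto 0
    simpa using h0.mono_left nhdsWithin_le_nhds
  have hle : ‖q n‖ ≤ 0 := by
    refine ge_of_tendsto htend ?_
    filter_upwards [Ioc_mem_nhdsGT_of_mem (by constructor <;> [rfl; exact hε₀pos] :
      (0:ℝ) ∈ Ico 0 ε₀)] with y hy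
    exact key y hy.1 hy.2
  simpa using le_antisymm hle (norm_nonneg _)

/-- n = 1: if `f : D → ℂᴺ` is holomorphic on a disk about `0` and
`‖f(e^{it}z)‖² = ‖f(z)‖²` for all real `t`, then the Taylor coefficient vectors of `f` are
pairwise orthogonal, at most `N` of them are nonzero, and `f` is a polynomial. -/
theorem stmt18 {N : ℕ} (r : ℝ) (hr : 0 < r)
    (f : ℂ → EuclideanSpace ℂ (Fin N))
    (hf : DifferentiableOn ℂ f (ball (0 : ℂ) r))
    (hinv : ∀ t : ℝ, ∀ z ∈ ball (0 : ℂ) r,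
      ‖f (Complex.exp (Complex.I * t) * z)‖ ^ 2 = ‖f z‖ ^ 2) :
    ∃ c : ℕ → EuclideanSpace ℂ (Fin N),
      (∀ z ∈ ball (0 : ℂ) r, HasSum (fun k : ℕ => z ^ k • c k) (f z)) ∧
      (∀ k l : ℕ, k ≠ l → (inner ℂ (c k) (c l) : ℂ) = 0) ∧
      {k : ℕ | c k ≠ 0}.Finite ∧ Nat.card {k : ℕ | c k ≠ 0} ≤ N := by
  have hhalfr : ((r/2).toNNReal : ℝ) = r/2 := Real.coe_toNNReal _ (by positivity)
  set p := cauchyPowerSeries f 0 (r/2).toNNReal with hpdef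
  have hball : ∀ s : ℝ, 0 < s → s < r → HasFPowerSeriesOnBall f p 0 s.toNNReal := by
    intro s hs0 hsr
    have hcoe : (s.toNNReal : ℝ) = s := Real.coe_toNNReal _ hs0.le
    have h1 : DifferentiableOn ℂ f (closedBall 0 ((s.toNNReal : NNReal) : ℝ)) := by
      rw [hcoe]; exact hf.mono (closedBall_subset_ball hsr)
    have h2 := h1.hasFPowerSeriesOnBall (by simpa [← NNReal.coe_lt_coe, hcoe] using hs0)
    have h3 : DifferentiableOn ℂ f (closedBall 0 (((r/2).toNNReal : NNReal) : ℝ)) := by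
      rw [hhalfr]; exact hf.mono (closedBall_subset_ball (by linarith))
    have h4 := h3.hasFPowerSeriesOnBall
      (by simpa [← NNReal.coe_lt_coe, hhalfr] using (by positivity : (0:ℝ) < r/2))
    have heq : p = cauchyPowerSeries f 0 s.toNNReal :=
      h4.hasFPowerSeriesAt.eq_formalMultilinearSeries h2.hasFPowerSeriesAt
    rwa [← heq] at h2
  have hSum : ∀ z ∈ ball (0:ℂ) r, HasSum (fun k => z ^ k • p.coeff k) (f z) := by
    intro z hz
    rw [mem_ball_zero_iff] at hz
    have hz0 : (0:ℝ) ≤ ‖z‖ := norm_nonneg z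
    set s : ℝ := (‖z‖ + r)/2 with hsdef
    have hs0 : 0 < s := by positivity
    have hsr : s < r := by rw [hsdef]; linarith
    have hps := hball s hs0 hsr
    have hz' : z ∈ Metric.eball (0:ℂ) ((s.toNNReal : NNReal) : ENNReal) := by
      rw [Metric.emetric_ball_nnreal, mem_ball_zero_iff, Real.coe_toNNReal _ hs0.le, hsdef]
      linarith
    have := hps.hasSum hz'
    simpa [FormalMultilinearSeries.apply_eq_pow_smul_coeff] using this
  have hcs : ∀ t : ℝ, 0 ≤ t → t < r → Summable fun k => ‖p.coeff k‖ * t ^ k := by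
    intro t ht htr
    set s : ℝ := (t + r)/2 with hsdef
    have hs0 : 0 < s := by positivity
    have hsr : s < r := by rw [hsdef]; linarith
    have h2 : ((t.toNNReal : NNReal) : ENNReal) < p.radius := by
      refine lt_of_lt_of_le ?_ (hball s hs0 hsr).r_le
      rw [ENNReal.coe_lt_coe, ← NNReal.coe_lt_coe, Real.coe_toNNReal _ ht,
        Real.coe_toNNReal _ hs0.le, hsdef]
      linarith
    have := p.summable_norm_mul_pow h2
    rw [show ((t.toNNReal : NNReal) : ℝ) = t from Real.coe_toNNReal _ ht] at this
    simpa [FormalMultilinearSeries.norm_apply_eq_norm_coef] using this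
  clear_value p
  clear hball hf hpdef hhalfr
  have key : ∀ w ∈ ball (0:ℂ) r,
      HasSum (fun kl : ℕ × ℕ =>
        (starRingEnd ℂ) w ^ kl.1 * w ^ kl.2 * (inner ℂ (p.coeff kl.1) (p.coeff kl.2) : ℂ))
        ((‖f w‖ : ℂ) ^ 2) := by
    intro w hw
    have hw' : ‖w‖ < r := mem_ball_zero_iff.1 hw
    have hws : Summable fun k => ‖p.coeff k‖ * ‖w‖ ^ k := hcs ‖w‖ (norm_nonneg w) hw'
    have hfs := hSum w hw
    have habs : Summable fun kl : ℕ × ℕ =>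
        (‖p.coeff kl.1‖ * ‖w‖ ^ kl.1) * (‖p.coeff kl.2‖ * ‖w‖ ^ kl.2) :=
      hws.mul_of_nonneg hws (fun k => mul_nonneg (norm_nonneg _) (pow_nonneg (norm_nonneg _) _))
        (fun k => mul_nonneg (norm_nonneg _) (pow_nonneg (norm_nonneg _) _))
    have hnormle : ∀ kl : ℕ × ℕ,
        ‖(starRingEnd ℂ) w ^ kl.1 * w ^ kl.2 * (inner ℂ (p.coeff kl.1) (p.coeff kl.2) : ℂ)‖
          ≤ (‖p.coeff kl.1‖ * ‖w‖ ^ kl.1) * (‖p.coeff kl.2‖ * ‖w‖ ^ kl.2) := by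
      intro kl
      rw [norm_mul, norm_mul, norm_pow, norm_pow, RCLike.norm_conj]
      calc ‖w‖ ^ kl.1 * ‖w‖ ^ kl.2 * ‖(inner ℂ (p.coeff kl.1) (p.coeff kl.2) : ℂ)‖
          ≤ ‖w‖ ^ kl.1 * ‖w‖ ^ kl.2 * (‖p.coeff kl.1‖ * ‖p.coeff kl.2‖) := by
            refine mul_le_mul_of_nonneg_left (norm_inner_le_norm _ _) (by positivity)
        _ = (‖p.coeff kl.1‖ * ‖w‖ ^ kl.1) * (‖p.coeff kl.2‖ * ‖w‖ ^ kl.2) := by ring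
    have hsn : Summable fun kl : ℕ × ℕ =>
        ‖(starRingEnd ℂ) w ^ kl.1 * w ^ kl.2 * (inner ℂ (p.coeff kl.1) (p.coeff kl.2) : ℂ)‖ :=
      habs.of_nonneg_of_le (fun kl => norm_nonneg _) hnormle
    have hsummable : Summable fun kl : ℕ × ℕ =>
        (starRingEnd ℂ) w ^ kl.1 * w ^ kl.2 * (inner ℂ (p.coeff kl.1) (p.coeff kl.2) : ℂ) :=
      hsn.of_norm
    have hOuter : HasSum (fun k => (starRingEnd ℂ) w ^ k * (inner ℂ (p.coeff k) (f w) : ℂ))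
        ((‖f w‖ : ℂ) ^ 2) := by
      have h1 := (innerSL ℂ (f w)).hasSum hfs
      have h2 := h1.star
      have he : (fun k => star ((innerSL ℂ (f w)) (w ^ k • p.coeff k)))
          = fun k => (starRingEnd ℂ) w ^ k * (inner ℂ (p.coeff k) (f w) : ℂ) := by
        funext k
        simp only [innerSL_apply_apply, inner_smul_right]
        rw [RCLike.star_def, map_mul, ← inner_conj_symm]
        simp [map_pow]
      rw [he] at h2
      have hx : star ((innerSL ℂ (f w)) (f w)) = ((‖f w‖ : ℂ) ^ 2) := by
        simp only [innerSL_apply_apply, inner_self_eq_norm_sq_to_K]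
        rw [RCLike.star_def]
        simp [← Complex.ofReal_pow]
      rwa [hx] at h2
    have hInner : ∀ k, HasSum
        (fun l => (starRingEnd ℂ) w ^ k * w ^ l * (inner ℂ (p.coeff k) (p.coeff l) : ℂ))
        ((starRingEnd ℂ) w ^ k * (inner ℂ (p.coeff k) (f w) : ℂ)) := by
      intro k
      have h1 := (innerSL ℂ (p.coeff k)).hasSum hfs
      have h2 := h1.mul_left ((starRingEnd ℂ) w ^ k)
      have he : (fun l => (starRingEnd ℂ) w ^ k * ((innerSL ℂ) (p.coeff k)) (w ^ l • p.coeff l))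
          = fun l => (starRingEnd ℂ) w ^ k * w ^ l * (inner ℂ (p.coeff k) (p.coeff l) : ℂ) := by
        funext l
        simp only [innerSL_apply_apply, inner_smul_right]
        ring
      rw [he] at h2
      exact h2
    have htsum : (∑' kl : ℕ × ℕ,
        (starRingEnd ℂ) w ^ kl.1 * w ^ kl.2 * (inner ℂ (p.coeff kl.1) (p.coeff kl.2) : ℂ))
        = (‖f w‖ : ℂ) ^ 2 := by
      rw [Summable.tsum_prod' hsummable (fun k => (hInner k).summable)]
      calc (∑' k, ∑' l, (starRingEnd ℂ) w ^ k * w ^ l * (inner ℂ (p.coeff k) (p.coeff l) : ℂ))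
          = ∑' k, (starRingEnd ℂ) w ^ k * (inner ℂ (p.coeff k) (f w) : ℂ) :=
            tsum_congr fun k => (hInner k).tsum_eq
        _ = (‖f w‖ : ℂ) ^ 2 := hOuter.tsum_eq
    exact htsum ▸ hsummable.hasSum
  have hfour : ∀ m : ℕ, 0 < m → ∀ x : ℝ, 0 < x → x < r →
      HasSum (fun k => (inner ℂ (p.coeff k) (p.coeff (k + m)) : ℂ) * ((x:ℂ) ^ 2) ^ k) 0 := by
    intro m hm x hx hxr
    have hxball : (x:ℂ) ∈ ball (0:ℂ) r := by
      rw [mem_ball_zero_iff, Complex.norm_real, Real.norm_of_nonneg hx.le]; exact hxr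
    set μ := MeasureTheory.volume.restrict (Ioc (0:ℝ) (2*Real.pi)) with hμdef
    set F : ℕ × ℕ → ℝ → ℂ := fun kl t =>
      (starRingEnd ℂ) (Complex.exp (Complex.I * t) * x) ^ kl.1 *
        (Complex.exp (Complex.I * t) * x) ^ kl.2 *
        (inner ℂ (p.coeff kl.1) (p.coeff kl.2) : ℂ) * Complex.exp (-(Complex.I * m * t)) with hFdef
    have hmem : ∀ t : ℝ, Complex.exp (Complex.I * t) * x ∈ ball (0:ℂ) r := by
      intro t
      rw [mem_ball_zero_iff, norm_mul]
      have h1 : ‖Complex.exp (Complex.I * t)‖ = 1 := by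
        rw [Complex.norm_exp]
        simp
      rw [h1, one_mul, Complex.norm_real, Real.norm_of_nonneg hx.le]; exact hxr
    have hFt : ∀ t : ℝ, HasSum (fun kl => F kl t)
        ((‖f x‖ : ℂ) ^ 2 * Complex.exp (-(Complex.I * m * t))) := by
      intro t
      have h1 := (key _ (hmem t)).mul_right (Complex.exp (-(Complex.I * m * t)))
      have h2 : ((‖f (Complex.exp (Complex.I * t) * x)‖ : ℂ)) ^ 2 = ((‖f x‖ : ℂ)) ^ 2 := by
        exact_mod_cast hinv t x hxball
      rw [h2] at h1
      exact h1
    have hFeq : ∀ kl : ℕ × ℕ, ∀ t : ℝ, F kl t =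
        ((x:ℂ) ^ (kl.1 + kl.2) * (inner ℂ (p.coeff kl.1) (p.coeff kl.2) : ℂ)) *
          Complex.exp (Complex.I * (((kl.2:ℤ) - kl.1 - m : ℤ) : ℂ) * t) := by
      intro kl t
      have hconj : (starRingEnd ℂ) (Complex.exp (Complex.I * t) * x)
          = Complex.exp (-(Complex.I * t)) * x := by
        rw [map_mul, ← Complex.exp_conj]
        simp [Complex.conj_ofReal]
      simp only [hFdef]
      rw [hconj]
      rw [show Complex.I * (((kl.2:ℤ) - kl.1 - m : ℤ) : ℂ) * t
          = (kl.2:ℕ) * (Complex.I * t) + ((kl.1:ℕ) * (-(Complex.I * t)) + (-(Complex.I * m * t)))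
          by push_cast; ring]
      rw [Complex.exp_add, Complex.exp_add, Complex.exp_nat_mul, Complex.exp_nat_mul]
      ring
    have hcont : ∀ kl : ℕ × ℕ, Continuous fun t : ℝ => F kl t := by
      intro kl
      rw [show (fun t : ℝ => F kl t)
          = fun t : ℝ => ((x:ℂ) ^ (kl.1 + kl.2) * (inner ℂ (p.coeff kl.1) (p.coeff kl.2) : ℂ)) *
            Complex.exp (Complex.I * (((kl.2:ℤ) - kl.1 - m : ℤ) : ℂ) * t)
          from funext (hFeq kl)]
      fun_prop
    have hFint : ∀ kl : ℕ × ℕ, MeasureTheory.Integrable (F kl) μ := fun kl =>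
      (hcont kl).integrableOn_Ioc
    have hnormF : ∀ kl : ℕ × ℕ, ∀ t : ℝ,
        ‖F kl t‖ = x ^ (kl.1 + kl.2) * ‖(inner ℂ (p.coeff kl.1) (p.coeff kl.2) : ℂ)‖ := by
      intro kl t
      rw [hFeq kl t, norm_mul, norm_mul]
      have h1 : ‖Complex.exp (Complex.I * (((kl.2:ℤ) - kl.1 - m : ℤ) : ℂ) * t)‖ = 1 := by
        rw [Complex.norm_exp]
        have h0 : (Complex.I * (((kl.2:ℤ) - kl.1 - m : ℤ) : ℂ) * (t:ℂ)).re = 0 := by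
          simp [Complex.mul_re]
        rw [h0, Real.exp_zero]
      rw [h1, mul_one, norm_pow, Complex.norm_real, Real.norm_of_nonneg hx.le]
    have h2pi : (0:ℝ) ≤ 2 * Real.pi := by positivity
    have hIntNorm : ∀ kl : ℕ × ℕ, (∫ t, ‖F kl t‖ ∂μ)
        = (2 * Real.pi) * (x ^ (kl.1 + kl.2) * ‖(inner ℂ (p.coeff kl.1) (p.coeff kl.2) : ℂ)‖) := by
      intro kl
      rw [show (fun t : ℝ => ‖F kl t‖)
          = fun _ : ℝ => x ^ (kl.1 + kl.2) * ‖(inner ℂ (p.coeff kl.1) (p.coeff kl.2) : ℂ)‖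
          from funext (hnormF kl)]
      rw [MeasureTheory.integral_const, hμdef]
      simp [Real.volume_Ioc, ENNReal.toReal_ofReal h2pi, Real.pi_pos.le]
    have hws : Summable fun k => ‖p.coeff k‖ * x ^ k := hcs x hx.le hxr
    have habs : Summable fun kl : ℕ × ℕ =>
        (‖p.coeff kl.1‖ * x ^ kl.1) * (‖p.coeff kl.2‖ * x ^ kl.2) :=
      hws.mul_of_nonneg hws (fun k => mul_nonneg (norm_nonneg _) (pow_nonneg hx.le _))
        (fun k => mul_nonneg (norm_nonneg _) (pow_nonneg hx.le _))
    have hsumInt : Summable fun kl : ℕ × ℕ => ∫ t, ‖F kl t‖ ∂μ := by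
      refine (habs.mul_left (2 * Real.pi)).of_nonneg_of_le
        (fun kl => MeasureTheory.integral_nonneg fun t => norm_nonneg _) (fun kl => ?_)
      rw [hIntNorm kl]
      refine mul_le_mul_of_nonneg_left ?_ h2pi
      rw [pow_add]
      calc x ^ kl.1 * x ^ kl.2 * ‖(inner ℂ (p.coeff kl.1) (p.coeff kl.2) : ℂ)‖
          ≤ x ^ kl.1 * x ^ kl.2 * (‖p.coeff kl.1‖ * ‖p.coeff kl.2‖) :=
            mul_le_mul_of_nonneg_left (norm_inner_le_norm _ _) (by positivity)
        _ = (‖p.coeff kl.1‖ * x ^ kl.1) * (‖p.coeff kl.2‖ * x ^ kl.2) := by ring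
    have hmain := MeasureTheory.hasSum_integral_of_summable_integral_norm hFint hsumInt
    have hrhs : (∫ t, ∑' kl : ℕ × ℕ, F kl t ∂μ) = 0 := by
      rw [MeasureTheory.integral_congr_ae
        (Filter.Eventually.of_forall (fun t => (hFt t).tsum_eq))]
      rw [MeasureTheory.integral_const_mul]
      rw [show (fun t : ℝ => Complex.exp (-(Complex.I * m * t)))
          = fun t : ℝ => Complex.exp (Complex.I * ((-(m:ℤ) : ℤ) : ℂ) * t) by
        funext t; push_cast; ring_nf]
      rw [hμdef, aux_J]
      rw [if_neg (by exact_mod_cast (neg_ne_zero.2 (by exact_mod_cast hm.ne' : (m:ℤ) ≠ 0)))]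
      rw [mul_zero]
    rw [hrhs] at hmain
    have hInt : ∀ kl : ℕ × ℕ, (∫ t, F kl t ∂μ)
        = if kl.2 = kl.1 + m then
            ((x:ℂ) ^ (kl.1 + kl.2) * (inner ℂ (p.coeff kl.1) (p.coeff kl.2) : ℂ)) * (2*Real.pi:ℂ)
          else 0 := by
      intro kl
      rw [MeasureTheory.integral_congr_ae (Filter.Eventually.of_forall (hFeq kl))]
      rw [MeasureTheory.integral_const_mul, hμdef, aux_J]
      by_cases hcase : kl.2 = kl.1 + m
      · rw [if_pos (by omega : ((kl.2:ℤ) - kl.1 - m : ℤ) = 0), if_pos hcase]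
      · rw [if_neg (by omega : ¬ ((kl.2:ℤ) - kl.1 - m : ℤ) = 0), if_neg hcase, mul_zero]
    simp only [hInt] at hmain
    have hemb : Function.Injective (fun k : ℕ => ((k, k + m) : ℕ × ℕ)) := by
      intro a b hab
      simpa using congrArg Prod.fst hab
    have hmain2 := (Function.Injective.hasSum_iff hemb ?_).2 hmain
    swap
    · intro kl hkl
      rw [if_neg]
      intro hc
      exact hkl ⟨kl.1, by rw [Prod.ext_iff]; exact ⟨rfl, hc.symm⟩⟩
    have he : ((fun kl : ℕ × ℕ => if kl.2 = kl.1 + m then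
            ((x:ℂ) ^ (kl.1 + kl.2) * (inner ℂ (p.coeff kl.1) (p.coeff kl.2) : ℂ)) * (2*Real.pi:ℂ)
          else 0) ∘ (fun k : ℕ => ((k, k + m) : ℕ × ℕ)))
        = fun k => ((inner ℂ (p.coeff k) (p.coeff (k + m)) : ℂ) * ((x:ℂ) ^ 2) ^ k) *
            ((x:ℂ) ^ m * (2*Real.pi:ℂ)) := by
      funext k
      show (if k + m = k + m then
          ((x:ℂ) ^ (k + (k + m)) * (inner ℂ (p.coeff k) (p.coeff (k + m)) : ℂ)) * (2*Real.pi:ℂ)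
        else 0) = _
      rw [if_pos rfl]
      ring
    rw [he] at hmain2
    have hxc : ((x:ℂ) ^ m * (2*Real.pi:ℂ)) ≠ 0 := by
      refine mul_ne_zero (pow_ne_zero _ (by exact_mod_cast hx.ne')) ?_
      exact_mod_cast (by positivity : (2*Real.pi : ℝ) ≠ 0)
    refine (hasSum_mul_right_iff (a₁ := 0) hxc).1 ?_
    rwa [zero_mul]
  have horth : ∀ k l : ℕ, k ≠ l → (inner ℂ (p.coeff k) (p.coeff l) : ℂ) = 0 := by
    have hlt : ∀ k l : ℕ, k < l → (inner ℂ (p.coeff k) (p.coeff l) : ℂ) = 0 := by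
      intro k l hkl
      set m := l - k with hmdef
      have hm : 0 < m := by omega
      have hmin : 0 < min r 1 := lt_min hr one_pos
      set s : ℝ := min r 1 / 2 with hsdef
      have hs0 : 0 < s := by rw [hsdef]; linarith
      have hsr : s < r := by
        have h1 : min r 1 ≤ r := min_le_left _ _
        rw [hsdef]; linarith
      set q : ℕ → ℂ := fun k' => (inner ℂ (p.coeff k') (p.coeff (k' + m)) : ℂ) with hqdef
      set ε : ℝ := s ^ 2 with hεdef
      have hε0 : 0 < ε := by rw [hεdef]; positivity
      have hu : Summable fun k' => ‖p.coeff k'‖ * s ^ k' := hcs s hs0.le hsr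
      have hv0 : Summable fun k' => ‖p.coeff (k' + m)‖ * s ^ (k' + m) :=
        hu.comp_injective (add_left_injective m)
      have hv : Summable fun k' => ‖p.coeff (k' + m)‖ * s ^ k' :=
        (hv0.mul_right ((s ^ m)⁻¹)).congr fun k' => by
          rw [pow_add]; field_simp
      have hU : ∀ k', ‖p.coeff k'‖ * s ^ k' ≤ ∑' j, ‖p.coeff j‖ * s ^ j := fun k' =>
        Summable.le_tsum hu k' fun j _ => by positivity
      have hqsum : Summable fun k' => ‖q k'‖ * ε ^ k' := by
      
        refine ((hv.mul_left (∑' j, ‖p.coeff j‖ * s ^ j)).of_nonneg_of_le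
          (fun k' => by positivity) (fun k' => ?_))
        simp only [hqdef, hεdef]
        calc ‖(inner ℂ (p.coeff k') (p.coeff (k' + m)) : ℂ)‖ * (s ^ 2) ^ k'
            ≤ (‖p.coeff k'‖ * ‖p.coeff (k' + m)‖) * (s ^ 2) ^ k' :=
              mul_le_mul_of_nonneg_right (norm_inner_le_norm _ _) (by positivity)
          _ = (‖p.coeff k'‖ * s ^ k') * (‖p.coeff (k' + m)‖ * s ^ k') := by
              rw [show (s ^ 2) ^ k' = s ^ k' * s ^ k' by rw [← pow_mul, two_mul, pow_add]]
              ring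
          _ ≤ (∑' j, ‖p.coeff j‖ * s ^ j) * (‖p.coeff (k' + m)‖ * s ^ k') :=
              mul_le_mul_of_nonneg_right (hU k') (by positivity)
      have hsums : ∀ y : ℝ, 0 < y → y < ε → HasSum (fun k' => q k' * (y : ℂ) ^ k') 0 := by
        intro y hy hyε
        set x : ℝ := Real.sqrt y with hxdef
        have hx0 : 0 < x := Real.sqrt_pos.2 hy
        have hxr : x < r := by
          have h1 : x < s := by
            rw [hxdef]
            calc Real.sqrt y < Real.sqrt ε := Real.sqrt_lt_sqrt hy.le hyε
              _ = s := by rw [hεdef, Real.sqrt_sq hs0.le]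
          linarith
        have h2 := hfour m hm x hx0 hxr
        have h3 : ((x : ℂ) ^ 2) = (y : ℂ) := by
          rw [hxdef]
          norm_cast
          exact Real.sq_sqrt hy.le
        rw [h3] at h2
        exact h2
      have hq0 := aux_coeffs q ε hε0 hqsum hsums k
      simp only [hqdef] at hq0
      rwa [show k + m = l by omega] at hq0
    intro k l hkl
    rcases lt_or_gt_of_ne hkl with h | h
    · exact hlt k l h
    · rw [← inner_conj_symm, hlt l k h]
      simp
  have hon : Orthonormal ℂ (fun k : {k : ℕ | p.coeff k ≠ 0} =>
      ((‖p.coeff (k:ℕ)‖ : ℂ))⁻¹ • p.coeff (k:ℕ)) := by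
    rw [orthonormal_iff_ite]
    intro i j
    rw [inner_smul_left, inner_smul_right]
    by_cases hij : i = j
    · subst hij
      rw [if_pos rfl, inner_self_eq_norm_sq_to_K]
      have hne : ((‖p.coeff (i:ℕ)‖ : ℝ) : ℂ) ≠ 0 := by
        exact_mod_cast norm_ne_zero_iff.2 i.2
      rw [map_inv₀, Complex.conj_ofReal]
      field_simp
      ring
      norm_cast
    · rw [if_neg hij, horth _ _ (fun hc => hij (Subtype.ext hc)), mul_zero, mul_zero]
  have hli := hon.linearIndependent
  have hfinite : Finite {k : ℕ | p.coeff k ≠ 0} := hli.finite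
  have hsetfin : Set.Finite {k : ℕ | p.coeff k ≠ 0} := Set.finite_coe_iff.mp hfinite
  refine ⟨p.coeff, hSum, horth, hsetfin, ?_⟩
  haveI := hsetfin.fintype
  rw [Nat.card_eq_fintype_card]
  have hcard := hli.fintype_card_le_finrank
  rwa [finrank_euclideanSpace_fin] at hcard
end
end
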